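/- arXiv:2112.10923 — 7 statements merged into one kernel-verified Lean document; each statement's English description precedes it below -/
import Mathlib

section
/- Let k ≥ 1 be a natural number. For every finitely supported function u : ℤ → ℂ with u(0) = 0, one has ∑_{n ∈ ℤ} |u(n) − u(n−1)|² (n − 1/2)^{2k} ≥ ((2k−1)²/4) · ∑_{n ∈ ℤ} |u(n)|² n^{2k−2}. -/
/-!
For `k = 1`, with the smaller weight `n (n - 1)` in place of `(n - 1/2)²`, the inequality is a sum
of the pointwise bounds `‖a - b‖² ≥ (1 - t) ‖a‖² + (1 - t⁻¹) ‖b‖²` (AM-GM), once the index of the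
`‖u (n - 1)‖²` terms is shifted; the ratios `t` come from a discrete ground state `≍ |n|^(-1/2)`.
Higher `k` follow by induction, applying the previous case to `v n = n u n`: since
`(n - 1) v n - n v (n - 1) = n (n - 1) (u n - u (n - 1))`, the energy of `u` with weight
`n (n - 1) (n - 1/2)^(2k+2)` dominates that of `v` with weight `n (n - 1) (n - 1/2)^(2k)` plus terms
`(n - 1/2)^(2k) (n ‖v (n - 1)‖² - (n - 1) ‖v n‖²)`, which after the same index shift are at least
`(2k + 2) n^(2k) ‖v n‖²`. Finally `n (n - 1) ≤ (n - 1/2)²`.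
-/

open Function

lemma summable_of_finite_support_of_eq_zero {E : Type*} [Zero E] {u : ℤ → E}
    (hu : (support u).Finite) {g : ℤ → ℝ} (hg : ∀ n, u n = 0 → u (n - 1) = 0 → g n = 0) :
    Summable g := by
  refine summable_of_hasFiniteSupport ((hu.union (hu.image (· + 1))).subset fun n hn => ?_)
  by_contra hmem
  simp only [Set.mem_union, mem_support, Set.mem_image, not_or, not_exists, not_and] at hmem
  exact hn (hg n (not_not.1 hmem.1) (not_not.1 fun h => hmem.2 (n - 1) h (sub_add_cancel n 1)))

lemma tsum_mul_add_mul_sub_one {a : ℤ → ℝ} (ha : (support a).Finite) (f g : ℤ → ℝ) :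
    ∑' n, (f n * a n + g n * a (n - 1)) = ∑' n, (f n + g (n + 1)) * a n := by
  have hshift : ∑' n, g n * a (n - 1) = ∑' n, g (n + 1) * a n := by
    simpa using ((Equiv.addRight (1 : ℤ)).tsum_eq fun n => g n * a (n - 1)).symm
  rw [Summable.tsum_add, hshift, ← Summable.tsum_add]
  · simp only [add_mul]
  all_goals exact summable_of_finite_support_of_eq_zero ha fun n h h' => by simp [h, h']

lemma one_sub_mul_sq_norm_add_le_sq_norm_sub {E : Type*} [SeminormedAddCommGroup E] {t : ℝ}
    (ht : 0 < t) (a b : E) : (1 - t) * ‖a‖ ^ 2 + (1 - t⁻¹) * ‖b‖ ^ 2 ≤ ‖a - b‖ ^ 2 := by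
  have hsq : (‖a‖ - ‖b‖) ^ 2 ≤ ‖a - b‖ ^ 2 := by
    rw [← sq_abs]
    exact pow_le_pow_left₀ (abs_nonneg _) (abs_norm_sub_norm_le a b) 2
  have hgap : (‖a‖ - ‖b‖) ^ 2 - ((1 - t) * ‖a‖ ^ 2 + (1 - t⁻¹) * ‖b‖ ^ 2)
      = (t * ‖a‖ - ‖b‖) ^ 2 / t := by
    field_simp
    ring
  have : 0 ≤ (t * ‖a‖ - ‖b‖) ^ 2 / t := by positivity
  linarith

lemma norm_smul_sub_smul_sq {E : Type*} [NormedAddCommGroup E] [InnerProductSpace ℝ E]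
    (x y : ℝ) (a b : E) :
    ‖x • a - y • b‖ ^ 2 = x * y * ‖a - b‖ ^ 2 + x * (x - y) * ‖a‖ ^ 2 + y * (y - x) * ‖b‖ ^ 2 := by
  simp only [norm_sub_sq_real, norm_smul, real_inner_smul_left, real_inner_smul_right, mul_pow,
    Real.norm_eq_abs, sq_abs]
  ring

lemma Int.cast_mul_sub_one_nonneg {R : Type*} [Ring R] [LinearOrder R] [IsStrictOrderedRing R]
    (n : ℤ) : (0 : R) ≤ n * (n - 1) := by
  have : (0 : ℤ) ≤ n * (n - 1) := by
    rcases le_or_gt n 0 with h | h <;> nlinarith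
  exact_mod_cast this

lemma mul_sq_norm_smul_sub_smul_le {E : Type*} [NormedAddCommGroup E] [InnerProductSpace ℝ E]
    (n : ℤ) (a b : E) :
    n * (n - 1) * ‖(n : ℝ) • a - ((n : ℝ) - 1) • b‖ ^ 2 - (n - 1) * ‖(n : ℝ) • a‖ ^ 2
        + n * ‖((n : ℝ) - 1) • b‖ ^ 2 ≤ n * (n - 1) * (n - 1 / 2) ^ 2 * ‖a - b‖ ^ 2 := by
  have hid := norm_smul_sub_smul_sq ((n : ℝ) - 1) n ((n : ℝ) • a) (((n : ℝ) - 1) • b)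
  rw [smul_smul, smul_smul, mul_comm _ (n : ℝ), ← smul_sub, norm_smul, mul_pow, Real.norm_eq_abs,
    sq_abs] at hid
  have hw := Int.cast_mul_sub_one_nonneg (R := ℝ) n
  have hle : (n : ℝ) * (n - 1) ≤ (n - 1 / 2) ^ 2 := by nlinarith
  have := mul_le_mul_of_nonneg_right (mul_le_mul_of_nonneg_left hle hw) (sq_nonneg ‖a - b‖)
  nlinarith

lemma two_mul_choose_mul_pow_le {m j : ℕ} (hj : j ≤ m) (hj_even : Even j) {h : ℝ} (hh : 0 ≤ h)
    (x : ℝ) : 2 * m.choose j * h ^ (m - j) * x ^ j ≤ (x + h) ^ m + (-x + h) ^ m := by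
  rw [add_pow, add_pow, ← Finset.sum_add_distrib]
  have hterm : ∀ i ∈ Finset.range (m + 1),
      0 ≤ x ^ i * h ^ (m - i) * m.choose i + (-x) ^ i * h ^ (m - i) * m.choose i := by
    intro i _
    rw [← add_mul, ← add_mul]
    refine mul_nonneg (mul_nonneg ?_ (by positivity)) (by positivity)
    rcases i.even_or_odd with hi | hi
    · rw [hi.neg_pow, ← two_mul]
      exact mul_nonneg zero_le_two (hi.pow_nonneg x)
    · rw [hi.neg_pow, add_neg_cancel]
  refine le_of_eq_of_le ?_ (Finset.single_le_sum hterm (Finset.mem_range.2 (Nat.lt_succ_of_le hj)))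
  rw [hj_even.neg_pow]
  ring

lemma two_mul_add_two_mul_pow_le (k : ℕ) (x : ℝ) :
    (2 * k + 2) * x ^ (2 * k)
      ≤ (x + 1) * (x + 1 / 2) ^ (2 * k) - (x - 1) * (x - 1 / 2) ^ (2 * k) := by
  have hodd := two_mul_choose_mul_pow_le (m := 2 * k + 1) (Nat.le_succ _) (even_two_mul k)
    (by norm_num : (0 : ℝ) ≤ 1 / 2) x
  have heven := two_mul_choose_mul_pow_le le_rfl (even_two_mul k)
    (by norm_num : (0 : ℝ) ≤ 1 / 2) x
  have hneg : -x + 1 / 2 = -(x - 1 / 2) := by ring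
  rw [hneg, (odd_two_mul_add_one k).neg_pow, pow_succ, pow_succ] at hodd
  rw [hneg, (even_two_mul k).neg_pow] at heven
  simp only [Nat.choose_succ_self_right, Nat.choose_self, Nat.add_sub_cancel_left, Nat.sub_self,
    pow_one, pow_zero] at hodd heven
  push_cast at hodd heven
  linear_combination hodd + heven / 2

-- `hardyRatio n = φ (n - 1) / φ n` for `φ n = (2|n|).choose |n| / 4 ^ |n| ≍ |n| ^ (-1/2)`.
noncomputable def hardyRatio (n : ℤ) : ℝ :=
  if 1 ≤ n then 2 * n / (2 * n - 1) else (1 - 2 * n) / (2 - 2 * n)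

lemma hardyRatio_pos (n : ℤ) : 0 < hardyRatio n := by
  unfold hardyRatio
  split_ifs with h
  · have : (1 : ℝ) ≤ n := by exact_mod_cast h
    apply div_pos <;> linarith
  · have : (n : ℝ) ≤ 0 := by exact_mod_cast (by omega : n ≤ 0)
    apply div_pos <;> linarith

lemma one_fourth_le_hardyRatio_coeff {n : ℤ} (hn : n ≠ 0) :
    1 / 4 ≤ n * (n - 1) * (1 - hardyRatio n)
      + ((n + 1 : ℤ) : ℝ) * ((n + 1 : ℤ) - 1) * (1 - (hardyRatio (n + 1))⁻¹) := by
  unfold hardyRatio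
  rw [← sub_nonneg]
  rcases lt_or_gt_of_ne hn with h | h
  · rw [if_neg (by omega), if_neg (by omega)]
    have hn' : (n : ℝ) ≤ -1 := by exact_mod_cast (by omega : n ≤ -1)
    have h1 : (1 : ℝ) - n ≠ 0 := by linarith
    have h2 : (1 : ℝ) - 2 * (n + 1) ≠ 0 := by linarith
    have h3 : -(2 * (n : ℝ)) - 1 ≠ 0 := by linarith
    push_cast
    refine le_of_le_of_eq (div_nonneg zero_le_one (by linarith : (0 : ℝ) ≤ 4 * (-2 * n - 1))) ?_
    rw [inv_div]
    field_simp
    ring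
  · rw [if_pos (by omega), if_pos (by omega)]
    have hn' : (1 : ℝ) ≤ n := by exact_mod_cast h
    have h1 : (2 : ℝ) * n - 1 ≠ 0 := by linarith
    push_cast
    refine le_of_le_of_eq (div_nonneg zero_le_one (by linarith : (0 : ℝ) ≤ 4 * (2 * n - 1))) ?_
    rw [inv_div]
    field_simp
    ring

lemma hardy_mul_sub_one {E : Type*} [SeminormedAddCommGroup E] {u : ℤ → E}
    (hu : (support u).Finite) (h0 : u 0 = 0) :
    1 / 4 * ∑' n : ℤ, ‖u n‖ ^ 2 ≤ ∑' n : ℤ, ‖u n - u (n - 1)‖ ^ 2 * (n * (n - 1)) := by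
  have hsq : (support fun n => ‖u n‖ ^ 2).Finite := hu.subset fun n hn h => hn (by simp [h])
  let t := hardyRatio
  calc 1 / 4 * ∑' n : ℤ, ‖u n‖ ^ 2 = ∑' n : ℤ, 1 / 4 * ‖u n‖ ^ 2 := tsum_mul_left.symm
    _ ≤ ∑' n : ℤ, (n * (n - 1) * (1 - t n)
          + ((n + 1 : ℤ) : ℝ) * ((n + 1 : ℤ) - 1) * (1 - (t (n + 1))⁻¹)) * ‖u n‖ ^ 2 := by
      refine Summable.tsum_le_tsum (fun n => ?_) ?_ ?_
      · rcases eq_or_ne n 0 with rfl | hn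
        · simp [h0]
        · exact mul_le_mul_of_nonneg_right (one_fourth_le_hardyRatio_coeff hn) (sq_nonneg _)
      all_goals exact summable_of_finite_support_of_eq_zero hu fun n h _ => by simp [h]
    _ = ∑' n : ℤ, (n * (n - 1) * (1 - t n) * ‖u n‖ ^ 2
          + n * (n - 1) * (1 - (t n)⁻¹) * ‖u (n - 1)‖ ^ 2) :=
      (tsum_mul_add_mul_sub_one hsq _ fun n : ℤ => n * (n - 1) * (1 - (t n)⁻¹)).symm
    _ ≤ ∑' n : ℤ, ‖u n - u (n - 1)‖ ^ 2 * (n * (n - 1)) := by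
      refine Summable.tsum_le_tsum (fun n => ?_) ?_ ?_
      · have := one_sub_mul_sq_norm_add_le_sq_norm_sub (hardyRatio_pos n) (u n) (u (n - 1))
        nlinarith [Int.cast_mul_sub_one_nonneg (R := ℝ) n]
      all_goals exact summable_of_finite_support_of_eq_zero hu fun n h h' => by simp [h, h']

noncomputable def hardyEnergy {E : Type*} [SeminormedAddCommGroup E] (k : ℕ) (u : ℤ → E) : ℝ :=
  ∑' n : ℤ, ‖u n - u (n - 1)‖ ^ 2 * (n * (n - 1) * (n - 1 / 2) ^ (2 * k))

lemma hardyEnergy_le {E : Type*} [SeminormedAddCommGroup E] (k : ℕ) {u : ℤ → E}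
    (hu : (support u).Finite) :
    hardyEnergy k u ≤ ∑' n : ℤ, ‖u n - u (n - 1)‖ ^ 2 * ((n : ℝ) - 1 / 2) ^ (2 * (k + 1)) := by
  refine Summable.tsum_le_tsum (fun n => mul_le_mul_of_nonneg_left ?_ (sq_nonneg _)) ?_ ?_
  · have hc := (even_two_mul k).pow_nonneg ((n : ℝ) - 1 / 2)
    rw [mul_add, mul_one, pow_add]
    nlinarith
  all_goals exact summable_of_finite_support_of_eq_zero hu fun n h h' => by simp [h, h']

section InnerProductSpace

variable {E : Type*} [NormedAddCommGroup E] [InnerProductSpace ℝ E]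

lemma hardyEnergy_smul_add_le (k : ℕ) {u : ℤ → E} (hu : (support u).Finite) :
    hardyEnergy k (fun n : ℤ => (n : ℝ) • u n)
        + ∑' n : ℤ, ((n + 1) * (n + 1 / 2) ^ (2 * k) - (n - 1) * (n - 1 / 2) ^ (2 * k))
          * ‖(n : ℝ) • u n‖ ^ 2
      ≤ hardyEnergy (k + 1) u := by
  let v : ℤ → E := fun n => (n : ℝ) • u n
  let c : ℤ → ℝ := fun n => ((n : ℝ) - 1 / 2) ^ (2 * k)
  have hsq : (support fun n => ‖v n‖ ^ 2).Finite :=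
    hu.subset fun n hn h => hn (by simp [v, h])
  have hsummable : ∀ g : ℤ → ℝ, (∀ n, u n = 0 → u (n - 1) = 0 → g n = 0) → Summable g :=
    fun g hg => summable_of_finite_support_of_eq_zero hu hg
  have hstep : ∀ n : ℤ, c n * (n * (n - 1) * ‖v n - v (n - 1)‖ ^ 2 - (n - 1) * ‖v n‖ ^ 2
      + n * ‖v (n - 1)‖ ^ 2)
        ≤ ‖u n - u (n - 1)‖ ^ 2 * (n * (n - 1) * (n - 1 / 2) ^ (2 * (k + 1))) := by
    intro n
    have hc : 0 ≤ c n := (even_two_mul k).pow_nonneg _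
    have := mul_le_mul_of_nonneg_left (mul_sq_norm_smul_sub_smul_le n (u n) (u (n - 1))) hc
    simp only [v, Int.cast_sub, Int.cast_one]
    refine this.trans_eq ?_
    simp only [c]
    ring
  have hshift := tsum_mul_add_mul_sub_one hsq (fun n : ℤ => -((n : ℝ) - 1) * c n)
    (fun n : ℤ => n * c n)
  have hcoef : ∑' n : ℤ, ((n + 1) * (n + 1 / 2) ^ (2 * k) - (n - 1) * c n) * ‖v n‖ ^ 2
      = ∑' n : ℤ, (-((n : ℝ) - 1) * c n + ((n + 1 : ℤ) : ℝ) * c (n + 1)) * ‖v n‖ ^ 2 :=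
    tsum_congr fun n => by simp only [c]; push_cast; ring
  change hardyEnergy k v + ∑' n : ℤ, ((n + 1) * (n + 1 / 2) ^ (2 * k) - (n - 1) * c n)
    * ‖v n‖ ^ 2 ≤ _
  rw [hcoef, ← hshift, hardyEnergy, hardyEnergy, ← Summable.tsum_add]
  · refine Summable.tsum_le_tsum (fun n => le_of_eq_of_le ?_ (hstep n)) ?_ ?_
    · ring
    all_goals exact hsummable _ fun n h h' => by simp [v, h, h']
  all_goals exact hsummable _ fun n h h' => by simp [v, h, h']

theorem le_hardyEnergy (k : ℕ) {u : ℤ → E} (hu : (support u).Finite) (h0 : u 0 = 0) :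
    (2 * k + 1) ^ 2 / 4 * ∑' n : ℤ, ‖u n‖ ^ 2 * (n : ℝ) ^ (2 * k) ≤ hardyEnergy k u := by
  induction k generalizing u with
  | zero => simpa [hardyEnergy] using hardy_mul_sub_one hu h0
  | succ k ih =>
    let v : ℤ → E := fun n => (n : ℝ) • u n
    have hvu : ∀ n : ℤ, ‖v n‖ ^ 2 * (n : ℝ) ^ (2 * k) = ‖u n‖ ^ 2 * (n : ℝ) ^ (2 * (k + 1)) := by
      intro n
      simp only [v, norm_smul, Real.norm_eq_abs, mul_pow, sq_abs]
      ring
    have hmid : ∑' n : ℤ, (2 * k + 2) * (n : ℝ) ^ (2 * k) * ‖v n‖ ^ 2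
        = (2 * k + 2) * ∑' n : ℤ, ‖u n‖ ^ 2 * (n : ℝ) ^ (2 * (k + 1)) := by
      rw [← tsum_mul_left]
      exact tsum_congr fun n => by rw [← hvu]; ring
    calc (2 * ↑(k + 1) + 1) ^ 2 / 4 * ∑' n : ℤ, ‖u n‖ ^ 2 * (n : ℝ) ^ (2 * (k + 1))
        = (2 * k + 1) ^ 2 / 4 * ∑' n : ℤ, ‖v n‖ ^ 2 * (n : ℝ) ^ (2 * k)
          + ∑' n : ℤ, (2 * k + 2) * (n : ℝ) ^ (2 * k) * ‖v n‖ ^ 2 := by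
          rw [tsum_congr hvu, hmid]
          push_cast
          ring
      _ ≤ hardyEnergy k v + ∑' n : ℤ,
            ((n + 1) * (n + 1 / 2) ^ (2 * k) - (n - 1) * (n - 1 / 2) ^ (2 * k)) * ‖v n‖ ^ 2 := by
          refine add_le_add (ih (hu.subset (support_smul_subset_right _ u)) (by simp [v]))
            (Summable.tsum_le_tsum (fun n => ?_) ?_ ?_)
          · exact mul_le_mul_of_nonneg_right (two_mul_add_two_mul_pow_le k n) (sq_nonneg _)
          all_goals exact summable_of_finite_support_of_eq_zero hu fun n h _ => by simp [v, h]
      _ ≤ hardyEnergy (k + 1) u := hardyEnergy_smul_add_le k hu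

end InnerProductSpace

theorem weighted_hardy
    (k : ℕ) (hk : 1 ≤ k) (u : ℤ → ℂ)
    (hu : (Function.support u).Finite) (h0 : u 0 = 0) :
    ∑' n : ℤ, ‖u n - u (n - 1)‖ ^ 2 * ((n : ℝ) - 1 / 2) ^ (2 * k) ≥
      ((2 * (k : ℝ) - 1) ^ 2 / 4) * ∑' n : ℤ, ‖u n‖ ^ 2 * (n : ℝ) ^ (2 * k - 2) := by
  obtain ⟨j, rfl⟩ : ∃ j, k = j + 1 := ⟨k - 1, by omega⟩
  rw [ge_iff_le, show 2 * (j + 1) - 2 = 2 * j by omega,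
    show 2 * ((j + 1 : ℕ) : ℝ) - 1 = 2 * j + 1 by push_cast; ring]
  exact (le_hardyEnergy j hu h0).trans (hardyEnergy_le j hu)
end

section
/- Let k ≥ 1 be a natural number. For every finitely supported function u : ℕ → ℂ with u(0) = 0 (where ℕ includes 0), one has ∑_{n=1}^{∞} |u(n) − u(n−1)|² n^{2k} ≥ ((2k−1)²/4) · ∑_{n=1}^{∞} (|u(n)|²/n²) · n^{2k}. -/
open scoped BigOperators

/-!
For a weight `H ≥ 0`, AM-GM gives pointwise
`H n (|u n|² - |u (n+1)|²) - H n² / P n · |u n|² ≤ P n |u (n+1) - u n|²`, and summing by parts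
(`u 0 = 0`, `u` finitely supported) turns the left side into `∑ (ΔH - H² / P) |u (n+1)|²`: a
discrete Riccati (ground state) argument. With `P n = (n+1)^(2k)`, the choice
`H n = c n^(k-1) (n+1)^k`, `c = (2k-1)/2`, discretises the optimal continuous weight `c x^(2k-1)`,
and `ΔH - H² / P ≥ c² (n+1)^(2k-2)` reduces, through the convexity of `t ↦ t^m`, to
`(y+2)^m - y^m ≥ 2m (y+1)^(m-1)` for `y ≥ 0`.
-/

open Finset

lemma norm_sq_sub_norm_sq_le {E : Type*} [SeminormedAddCommGroup E] (x y : E) :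
    ‖x‖ ^ 2 - ‖y‖ ^ 2 ≤ 2 * ‖x‖ * ‖y - x‖ := by
  have := norm_sub_norm_le x y
  rw [norm_sub_rev] at this
  rcases le_total ‖x‖ ‖y‖ with hxy | hyx
  · nlinarith [norm_nonneg x, norm_nonneg (y - x)]
  · nlinarith [norm_nonneg y, norm_nonneg (y - x)]

lemma mul_norm_sq_sub_norm_sq_sub_le {E : Type*} [SeminormedAddCommGroup E] (x y : E) {h p : ℝ}
    (hh : 0 ≤ h) (hp : 0 < p) :
    h * (‖x‖ ^ 2 - ‖y‖ ^ 2) - h ^ 2 / p * ‖x‖ ^ 2 ≤ p * ‖y - x‖ ^ 2 := by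
  have hamgm : 2 * h * ‖x‖ * ‖y - x‖ ≤ p * ‖y - x‖ ^ 2 + h ^ 2 / p * ‖x‖ ^ 2 := by
    rw [← sub_nonneg]
    have : p * ‖y - x‖ ^ 2 + h ^ 2 / p * ‖x‖ ^ 2 - 2 * h * ‖x‖ * ‖y - x‖
        = (p * ‖y - x‖ - h * ‖x‖) ^ 2 / p := by
      field_simp; ring
    rw [this]; positivity
  nlinarith [mul_le_mul_of_nonneg_left (norm_sq_sub_norm_sq_le x y) hh]

theorem sum_range_mul_norm_sq_le_sum_mul_norm_sub_sq {E : Type*} [SeminormedAddCommGroup E]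
    {H P : ℕ → ℝ} (hH : ∀ n, 0 ≤ H n) (hP : ∀ n, 0 < P n) {u : ℕ → E} {N : ℕ}
    (h0 : u 0 = 0) (hN : u N = 0) :
    ∑ n ∈ range N, (H (n + 1) - H n - H (n + 1) ^ 2 / P (n + 1)) * ‖u (n + 1)‖ ^ 2
      ≤ ∑ n ∈ range N, P n * ‖u (n + 1) - u n‖ ^ 2 := by
  set f : ℕ → ℝ := fun n => (H n - H n ^ 2 / P n) * ‖u n‖ ^ 2
  have hshift : ∑ n ∈ range N, f (n + 1) = ∑ n ∈ range N, f n := by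
    have := sum_range_sub f N
    simp only [f, h0, hN, norm_zero, sum_sub_distrib] at this
    linarith
  calc ∑ n ∈ range N, (H (n + 1) - H n - H (n + 1) ^ 2 / P (n + 1)) * ‖u (n + 1)‖ ^ 2
      = ∑ n ∈ range N, (f (n + 1) - H n * ‖u (n + 1)‖ ^ 2) := by
        refine sum_congr rfl fun n _ => ?_
        simp only [f]; ring
    _ = ∑ n ∈ range N, (H n * (‖u n‖ ^ 2 - ‖u (n + 1)‖ ^ 2) - H n ^ 2 / P n * ‖u n‖ ^ 2) := by
        rw [sum_sub_distrib, hshift, ← sum_sub_distrib]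
        refine sum_congr rfl fun n _ => ?_
        simp only [f]; ring
    _ ≤ ∑ n ∈ range N, P n * ‖u (n + 1) - u n‖ ^ 2 :=
        sum_le_sum fun n _ => mul_norm_sq_sub_norm_sq_sub_le _ _ (hH n) (hP n)

lemma two_mul_pow_le_pow_add_pow (m : ℕ) {y : ℝ} (hy : 0 ≤ y) :
    2 * (y + 1) ^ m ≤ y ^ m + (y + 2) ^ m := by
  have := (convexOn_pow m).2 (Set.mem_Ici.2 hy) (Set.mem_Ici.2 (by linarith : (0 : ℝ) ≤ y + 2))
    (by norm_num : (0 : ℝ) ≤ 1 / 2) (by norm_num : (0 : ℝ) ≤ 1 / 2) (by norm_num)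
  simp only [smul_eq_mul] at this
  rw [show 1 / 2 * y + 1 / 2 * (y + 2) = y + 1 by ring] at this
  linarith

lemma two_mul_succ_mul_pow_le_pow_sub_pow (m : ℕ) {y : ℝ} (hy : 0 ≤ y) :
    2 * ((m : ℝ) + 1) * (y + 1) ^ m ≤ (y + 2) ^ (m + 1) - y ^ (m + 1) := by
  induction m with
  | zero => norm_num
  | succ m ih =>
    push_cast
    linear_combination mul_le_mul_of_nonneg_left ih (by linarith : 0 ≤ y + 1)
      + two_mul_pow_le_pow_add_pow (m + 1) hy

lemma two_mul_add_one_mul_pow_le (j : ℕ) {y : ℝ} (hy : 0 ≤ y) :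
    (2 * (j : ℝ) + 1) * (y + 1) ^ j ≤ (y + 2) ^ (j + 1) - y ^ j * (y + 1) := by
  linear_combination two_mul_succ_mul_pow_le_pow_sub_pow j hy
    + pow_le_pow_left₀ hy (by linarith : y ≤ y + 1) j

/-- The weight `H` above for `k = j + 1`. -/
noncomputable def hardyWeight (j n : ℕ) : ℝ := (2 * j + 1) / 2 * (n : ℝ) ^ j * ((n : ℝ) + 1) ^ (j + 1)

lemma hardyWeight_nonneg (j n : ℕ) : 0 ≤ hardyWeight j n := by
  unfold hardyWeight; positivity

lemma sq_mul_pow_le_hardyWeight_succ_sub (j n : ℕ) :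
    ((2 * (j : ℝ) + 1) / 2) ^ 2 * ((n : ℝ) + 1) ^ (2 * j)
      ≤ hardyWeight j (n + 1) - hardyWeight j n
        - hardyWeight j (n + 1) ^ 2 / (((n + 1 : ℕ) : ℝ) + 1) ^ (2 * (j + 1)) := by
  have hy : (0 : ℝ) ≤ n := n.cast_nonneg
  have hsucc : hardyWeight j (n + 1)
      = (2 * j + 1) / 2 * ((n : ℝ) + 1) ^ j * ((n : ℝ) + 2) ^ (j + 1) := by
    unfold hardyWeight; push_cast; ring
  have hsq : hardyWeight j (n + 1) ^ 2 / (((n + 1 : ℕ) : ℝ) + 1) ^ (2 * (j + 1))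
      = ((2 * (j : ℝ) + 1) / 2) ^ 2 * ((n : ℝ) + 1) ^ (2 * j) := by
    rw [hsucc]; push_cast; field_simp; ring
  rw [hsq, hsucc, hardyWeight]
  linear_combination mul_le_mul_of_nonneg_left (two_mul_add_one_mul_pow_le j hy)
    (by positivity : (0 : ℝ) ≤ (2 * j + 1) / 2 * ((n : ℝ) + 1) ^ j)

theorem power_weight_hardy
    (k : ℕ) (hk : 1 ≤ k) (u : ℕ → ℂ)
    (hu : (Function.support u).Finite) (h0 : u 0 = 0) :
    ∑' n : ℕ, ‖u (n + 1) - u n‖ ^ 2 * ((n : ℝ) + 1) ^ (2 * k) ≥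
      ((2 * (k : ℝ) - 1) ^ 2 / 4) *
        ∑' n : ℕ, (‖u (n + 1)‖ ^ 2 / ((n : ℝ) + 1) ^ 2) * ((n : ℝ) + 1) ^ (2 * k) := by
  obtain ⟨j, rfl⟩ : ∃ j, k = j + 1 := ⟨k - 1, by omega⟩
  have hev : ∀ᶠ n in Filter.cofinite, u n = 0 := Filter.eventually_cofinite.2 hu
  rw [Nat.cofinite_eq_atTop] at hev
  obtain ⟨N, hN⟩ := hev.exists_forall_of_atTop
  have hvanish : ∀ n ∉ range N, u n = 0 ∧ u (n + 1) = 0 := fun n hn => by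
    rw [mem_range, not_lt] at hn
    exact ⟨hN n hn, hN (n + 1) (by omega)⟩
  rw [tsum_eq_sum (s := range N) fun n hn => by simp [hvanish n hn],
    tsum_eq_sum (s := range N) fun n hn => by simp [hvanish n hn], mul_sum, ge_iff_le]
  calc ∑ n ∈ range N, (2 * ((j + 1 : ℕ) : ℝ) - 1) ^ 2 / 4
          * (‖u (n + 1)‖ ^ 2 / ((n : ℝ) + 1) ^ 2 * ((n : ℝ) + 1) ^ (2 * (j + 1)))
      ≤ ∑ n ∈ range N, (hardyWeight j (n + 1) - hardyWeight j n
          - hardyWeight j (n + 1) ^ 2 / (((n + 1 : ℕ) : ℝ) + 1) ^ (2 * (j + 1)))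
          * ‖u (n + 1)‖ ^ 2 := by
        refine sum_le_sum fun n _ => le_of_eq_of_le ?_
          (mul_le_mul_of_nonneg_right (sq_mul_pow_le_hardyWeight_succ_sub j n) (sq_nonneg _))
        push_cast; field_simp; ring
    _ ≤ ∑ n ∈ range N, ((n : ℝ) + 1) ^ (2 * (j + 1)) * ‖u (n + 1) - u n‖ ^ 2 :=
        sum_range_mul_norm_sq_le_sum_mul_norm_sub_sq (H := hardyWeight j)
          (P := fun n : ℕ => ((n : ℝ) + 1) ^ (2 * (j + 1))) (hardyWeight_nonneg j)
          (fun n => by positivity) h0 (hN N le_rfl)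
    _ = _ := by simp_rw [mul_comm]
end

section
/- Let k ≥ 1 be a natural number. The constant (2k−1)²/4 in the power weight Hardy inequality on ℕ is sharp: for every real c > (2k−1)²/4 there exists a finitely supported function u : ℕ → ℂ with u(0) = 0 such that ∑_{n=1}^{∞} |u(n) − u(n−1)|² n^{2k} < c · ∑_{n=1}^{∞} (|u(n)|²/n²) · n^{2k}. -/
/-!
The extremal profile is `n ^ (-s)` with `s = (2k - 1) / 2`: its mass term is exactly `1 / n` and,
by the mean value bound `n ^ (-s) - (n + 1) ^ (-s) ≤ s n ^ (-s - 1)`, its energy term is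
`s² / n + O(1 / n²)`. On `[1, N]` both sums are therefore harmonic numbers `H_N`, up to `O(1)`, with
ratio `s²`. To make the profile finitely supported it is continued past `N` by
`N ^ (3/2) n ^ (-(k + 1))` (which agrees with `n ^ (-s)` at `n = N`), whose energy on `[N, N²]` is
`O(1)` because its terms are `O(N³ / n⁴)`, and it is then cut off at `N²`, which costs `O(N³ / N⁴)`.
As `H_N → ∞`, the energy-to-mass ratio tends to `s²`.
-/

open Finset Filter

lemma one_sub_mul_le_one_add_rpow_neg {a h : ℝ} (ha : 0 ≤ a) (hh : 0 ≤ h) :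
    1 - a * h ≤ (1 + h) ^ (-a) := by
  have hlog : Real.log (1 + h) ≤ h := by
    linarith [Real.log_le_sub_one_of_pos (show 0 < 1 + h by linarith)]
  rw [Real.rpow_def_of_pos (by linarith)]
  nlinarith [Real.add_one_le_exp (Real.log (1 + h) * -a)]

lemma rpow_neg_sub_rpow_neg_nonneg {a x : ℝ} (ha : 0 ≤ a) (hx : 0 < x) :
    0 ≤ x ^ (-a) - (x + 1) ^ (-a) :=
  sub_nonneg.2 (Real.rpow_le_rpow_of_nonpos hx (by linarith) (by linarith))

lemma rpow_neg_sub_rpow_neg_le {a x : ℝ} (ha : 0 ≤ a) (hx : 0 < x) :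
    x ^ (-a) - (x + 1) ^ (-a) ≤ a * x ^ (-a - 1) := by
  have hsplit : (x + 1) ^ (-a) = x ^ (-a) * (1 + x⁻¹) ^ (-a) := by
    rw [← Real.mul_rpow hx.le (by positivity), mul_add, mul_inv_cancel₀ hx.ne', mul_one]
  have hpow : x ^ (-a - 1) = x ^ (-a) * x⁻¹ := by
    rw [Real.rpow_sub hx, Real.rpow_one, div_eq_mul_inv]
  have hbern := one_sub_mul_le_one_add_rpow_neg ha (inv_nonneg.2 hx.le)
  have := mul_le_mul_of_nonneg_left hbern (Real.rpow_nonneg hx.le (-a))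
  rw [hsplit, hpow]
  nlinarith

lemma rpow_neg_sq_mul_pow_eq {x : ℝ} (a : ℝ) (m : ℕ) (hx : 0 < x) :
    (x ^ (-a)) ^ 2 * (x + 1) ^ m = x ^ ((m : ℝ) - 2 * a) * (1 + x⁻¹) ^ m := by
  have hsucc : (x + 1) ^ m = x ^ (m : ℝ) * (1 + x⁻¹) ^ m := by
    rw [Real.rpow_natCast, ← mul_pow, mul_add, mul_inv_cancel₀ hx.ne', mul_one]
  rw [hsucc, ← mul_assoc, ← Real.rpow_mul_natCast hx.le, ← Real.rpow_add hx]
  ring_nf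

lemma sq_rpow_neg_sub_mul_pow_le {a x : ℝ} (m : ℕ) (ha : 0 ≤ a) (hx : 0 < x) :
    (x ^ (-a) - (x + 1) ^ (-a)) ^ 2 * (x + 1) ^ m
      ≤ a ^ 2 * (x ^ ((m : ℝ) - 2 * (a + 1)) * (1 + x⁻¹) ^ m) := by
  have hdiff : (x ^ (-a) - (x + 1) ^ (-a)) ^ 2 ≤ a ^ 2 * (x ^ (-(a + 1))) ^ 2 := by
    rw [← mul_pow, neg_add']
    exact pow_le_pow_left₀ (rpow_neg_sub_rpow_neg_nonneg ha hx) (rpow_neg_sub_rpow_neg_le ha hx) 2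
  rw [← rpow_neg_sq_mul_pow_eq _ _ hx, ← mul_assoc]
  gcongr

lemma one_add_inv_pow_le {x : ℝ} (hx : 1 ≤ x) (m : ℕ) : (1 + x⁻¹) ^ m ≤ 2 ^ m := by
  have : x⁻¹ ≤ 1 := inv_le_one_of_one_le₀ hx
  gcongr
  linarith

lemma one_add_pow_le_one_add_two_pow_mul {t : ℝ} (ht₀ : 0 ≤ t) (ht₁ : t ≤ 1) (m : ℕ) :
    (1 + t) ^ m ≤ 1 + 2 ^ m * t := by
  have := (convexOn_pow m).2 (x := 1) (y := 2) (by simp) (by simp)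
    (by linarith : 0 ≤ 1 - t) ht₀ (by ring)
  have hmid : (1 - t) * 1 + t * 2 = 1 + t := by ring
  simp only [smul_eq_mul, one_pow, hmid] at this
  linarith

lemma sum_Ico_inv_sq_le {a : ℕ} (ha : 1 ≤ a) (b : ℕ) :
    ∑ n ∈ Ico a b, ((n : ℝ) ^ 2)⁻¹ ≤ 2 / a := by
  obtain ⟨a, rfl⟩ := Nat.exists_eq_add_of_le' ha
  rw [Finset.Ico_add_one_left_eq_Ioo]
  exact_mod_cast sum_Ioo_inv_sq_le a b

def powerWeightEnergy (k : ℕ) (v : ℕ → ℝ) (M : ℕ) : ℝ :=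
  ∑ n ∈ range M, (v (n + 1) - v n) ^ 2 * ((n : ℝ) + 1) ^ (2 * k)

noncomputable def powerWeightMass (k : ℕ) (v : ℕ → ℝ) (M : ℕ) : ℝ :=
  ∑ n ∈ range M, v (n + 1) ^ 2 / ((n : ℝ) + 1) ^ 2 * ((n : ℝ) + 1) ^ (2 * k)

section
variable {v : ℕ → ℝ} {M : ℕ}

lemma tsum_norm_sub_sq_mul_eq_powerWeightEnergy (k : ℕ) (hv : ∀ n, M < n → v n = 0) :
    ∑' n : ℕ, ‖(v (n + 1) : ℂ) - v n‖ ^ 2 * ((n : ℝ) + 1) ^ (2 * k)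
      = powerWeightEnergy k v (M + 1) := by
  rw [powerWeightEnergy, tsum_eq_sum (s := range (M + 1))]
  · refine sum_congr rfl fun n _ ↦ ?_
    rw [← Complex.ofReal_sub, Complex.norm_real, Real.norm_eq_abs, sq_abs]
  · intro n hn
    rw [mem_range, not_lt] at hn
    simp [hv n (by omega), hv (n + 1) (by omega)]

lemma tsum_norm_sq_div_mul_eq_powerWeightMass (k : ℕ) (hv : ∀ n, M < n → v n = 0) :
    ∑' n : ℕ, ‖(v (n + 1) : ℂ)‖ ^ 2 / ((n : ℝ) + 1) ^ 2 * ((n : ℝ) + 1) ^ (2 * k)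
      = powerWeightMass k v (M + 1) := by
  rw [powerWeightMass, tsum_eq_sum (s := range (M + 1))]
  · refine sum_congr rfl fun n _ ↦ ?_
    rw [Complex.norm_real, Real.norm_eq_abs, sq_abs]
  · intro n hn
    rw [mem_range, not_lt] at hn
    simp [hv (n + 1) (by omega)]

end

noncomputable def hardyTestSeq (k N n : ℕ) : ℝ :=
  if n = 0 then 0
  else if n ≤ N then (n : ℝ) ^ (-((2 * k - 1) / 2 : ℝ))
  else if n ≤ N ^ 2 then (N : ℝ) ^ (3 / 2 : ℝ) * (n : ℝ) ^ (-(k + 1 : ℝ))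
  else 0

namespace hardyTestSeq

variable {k N n : ℕ}

lemma apply_zero : hardyTestSeq k N 0 = 0 := by simp [hardyTestSeq]

lemma apply_of_le (hn : 1 ≤ n) (hnN : n ≤ N) :
    hardyTestSeq k N n = (n : ℝ) ^ (-((2 * k - 1) / 2 : ℝ)) := by
  simp [hardyTestSeq, hnN, Nat.one_le_iff_ne_zero.1 hn]

lemma apply_of_ge (hN : 1 ≤ N) (hNn : N ≤ n) (hn : n ≤ N ^ 2) :
    hardyTestSeq k N n = (N : ℝ) ^ (3 / 2 : ℝ) * (n : ℝ) ^ (-(k + 1 : ℝ)) := by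
  rcases hNn.eq_or_lt with rfl | hlt
  · rw [apply_of_le hN le_rfl, ← Real.rpow_add (by positivity)]
    ring_nf
  · simp [hardyTestSeq, (show n ≠ 0 by omega), hlt.not_ge, hn]

lemma apply_of_gt (hn : N ^ 2 < n) : hardyTestSeq k N n = 0 := by
  have : N ≤ N ^ 2 := Nat.le_self_pow two_ne_zero N
  simp [hardyTestSeq, (show n ≠ 0 by omega), (show ¬ n ≤ N by omega), hn.not_ge]

lemma energy_term_le_of_lt (hk : 1 ≤ k) (hn : 1 ≤ n) (hnN : n < N) :
    (hardyTestSeq k N (n + 1) - hardyTestSeq k N n) ^ 2 * ((n : ℝ) + 1) ^ (2 * k)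
      ≤ (2 * (k : ℝ) - 1) ^ 2 / 4 * ((n : ℝ)⁻¹ + 4 ^ k * ((n : ℝ) ^ 2)⁻¹) := by
  have hx : (1 : ℝ) ≤ n := by exact_mod_cast hn
  have hs : 0 ≤ (2 * (k : ℝ) - 1) / 2 := by
    have : (1 : ℝ) ≤ k := by exact_mod_cast hk
    linarith
  have hexp : ((2 * k : ℕ) : ℝ) - 2 * ((2 * k - 1) / 2 + 1) = -1 := by push_cast; ring
  have hconv : (1 + (n : ℝ)⁻¹) ^ (2 * k) ≤ 1 + 4 ^ k * (n : ℝ)⁻¹ := by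
    have h4 : (2 : ℝ) ^ (2 * k) = 4 ^ k := by rw [pow_mul]; norm_num
    simpa only [h4] using
      one_add_pow_le_one_add_two_pow_mul (inv_nonneg.2 (by linarith)) (inv_le_one_of_one_le₀ hx)
        (2 * k)
  rw [apply_of_le hn hnN.le, apply_of_le (by omega) hnN, Nat.cast_succ, sub_sq_comm]
  calc _ ≤ ((2 * k - 1) / 2) ^ 2 * ((n : ℝ) ^ (-1 : ℝ) * (1 + (n : ℝ)⁻¹) ^ (2 * k)) := by
        simpa only [hexp] using sq_rpow_neg_sub_mul_pow_le (2 * k) hs (by linarith)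
    _ ≤ ((2 * k - 1) / 2) ^ 2 * ((n : ℝ)⁻¹ * (1 + 4 ^ k * (n : ℝ)⁻¹)) := by
        rw [Real.rpow_neg_one]
        gcongr
    _ = _ := by ring

lemma energy_term_le_of_ge (hN : 1 ≤ N) (hNn : N ≤ n) (hn : n < N ^ 2) :
    (hardyTestSeq k N (n + 1) - hardyTestSeq k N n) ^ 2 * ((n : ℝ) + 1) ^ (2 * k)
      ≤ ((k : ℝ) + 1) ^ 2 * 4 ^ k * (N * ((n : ℝ) ^ 2)⁻¹) := by
  have hN' : (1 : ℝ) ≤ N := by exact_mod_cast hN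
  have hNn' : (N : ℝ) ≤ n := by exact_mod_cast hNn
  have hx1 : (1 : ℝ) ≤ n := hN'.trans hNn'
  have hx : (0 : ℝ) < n := by linarith
  have hN3 : ((N : ℝ) ^ (3 / 2 : ℝ)) ^ 2 = N ^ 3 := by
    rw [← Real.rpow_mul_natCast (by positivity)]
    norm_num
  have hexp : ((2 * k : ℕ) : ℝ) - 2 * ((k + 1 : ℝ) + 1) = -4 := by push_cast; ring
  have hpow : (n : ℝ) ^ (-4 : ℝ) = ((n : ℝ) ^ 4)⁻¹ := by
    rw [Real.rpow_neg hx.le]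
    norm_cast
  have h4 : (1 + (n : ℝ)⁻¹) ^ (2 * k) ≤ 4 ^ k := by
    have := one_add_inv_pow_le hx1 (2 * k)
    rwa [pow_mul (2 : ℝ), show (2 : ℝ) ^ 2 = 4 by norm_num] at this
  have hNx : (N : ℝ) ^ 3 * ((n : ℝ) ^ 4)⁻¹ ≤ N * ((n : ℝ) ^ 2)⁻¹ := by
    rw [← div_eq_mul_inv, ← div_eq_mul_inv, div_le_div_iff₀ (by positivity) (by positivity)]
    calc (N : ℝ) ^ 3 * (n : ℝ) ^ 2 = N * (n : ℝ) ^ 2 * (N : ℝ) ^ 2 := by ring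
      _ ≤ N * (n : ℝ) ^ 2 * (n : ℝ) ^ 2 := by gcongr
      _ = N * (n : ℝ) ^ 4 := by ring
  have hdiff := sq_rpow_neg_sub_mul_pow_le (2 * k) (by positivity : (0 : ℝ) ≤ k + 1) hx
  rw [hexp, hpow] at hdiff
  rw [apply_of_ge hN hNn hn.le, apply_of_ge hN (by omega) hn, Nat.cast_succ]
  calc _ = ((N : ℝ) ^ (3 / 2 : ℝ)) ^ 2
        * (((n : ℝ) ^ (-(k + 1 : ℝ)) - ((n : ℝ) + 1) ^ (-(k + 1 : ℝ))) ^ 2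
          * ((n : ℝ) + 1) ^ (2 * k)) := by ring
    _ ≤ N ^ 3 * (((k : ℝ) + 1) ^ 2 * (((n : ℝ) ^ 4)⁻¹ * 4 ^ k)) := by
        rw [hN3]
        exact mul_le_mul_of_nonneg_left (hdiff.trans (by gcongr)) (by positivity)
    _ = ((k : ℝ) + 1) ^ 2 * 4 ^ k * (N ^ 3 * ((n : ℝ) ^ 4)⁻¹) := by ring
    _ ≤ _ := by gcongr

lemma energy_term_cutoff_le (hN : 1 ≤ N) :
    (hardyTestSeq k N (N ^ 2 + 1) - hardyTestSeq k N (N ^ 2)) ^ 2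
        * (((N ^ 2 : ℕ) : ℝ) + 1) ^ (2 * k) ≤ 4 ^ k := by
  have hN' : (1 : ℝ) ≤ N := by exact_mod_cast hN
  have hx1 : (1 : ℝ) ≤ ((N ^ 2 : ℕ) : ℝ) := by push_cast; nlinarith
  have hN3 : ((N : ℝ) ^ (3 / 2 : ℝ)) ^ 2 = N ^ 3 := by
    rw [← Real.rpow_mul_natCast (by positivity)]
    norm_num
  have hexp : ((2 * k : ℕ) : ℝ) - 2 * (k + 1 : ℝ) = -2 := by push_cast; ring
  have hpow : ((N ^ 2 : ℕ) : ℝ) ^ (-2 : ℝ) = ((N : ℝ) ^ 4)⁻¹ := by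
    rw [Real.rpow_neg (by positivity)]
    norm_cast
    rw [← pow_mul]
  have h4 : (1 + ((N ^ 2 : ℕ) : ℝ)⁻¹) ^ (2 * k) ≤ 4 ^ k := by
    have := one_add_inv_pow_le hx1 (2 * k)
    rwa [pow_mul (2 : ℝ), show (2 : ℝ) ^ 2 = 4 by norm_num] at this
  have hsq := rpow_neg_sq_mul_pow_eq (k + 1 : ℝ) (2 * k) (by linarith : (0 : ℝ) < (N ^ 2 : ℕ))
  rw [hexp, hpow] at hsq
  rw [apply_of_gt (lt_add_one _), apply_of_ge hN (Nat.le_self_pow two_ne_zero N) le_rfl]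
  calc _ = ((N : ℝ) ^ (3 / 2 : ℝ)) ^ 2 * ((((N ^ 2 : ℕ) : ℝ) ^ (-(k + 1 : ℝ))) ^ 2
        * (((N ^ 2 : ℕ) : ℝ) + 1) ^ (2 * k)) := by ring
    _ ≤ N ^ 3 * (((N : ℝ) ^ 4)⁻¹ * 4 ^ k) := by
        rw [hN3, hsq]
        gcongr
    _ = (N : ℝ)⁻¹ * 4 ^ k := by field_simp
    _ ≤ 4 ^ k := mul_le_of_le_one_left (by positivity) (inv_le_one_of_one_le₀ hN')

lemma mass_term_eq (hnN : n < N) :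
    hardyTestSeq k N (n + 1) ^ 2 / ((n : ℝ) + 1) ^ 2 * ((n : ℝ) + 1) ^ (2 * k)
      = 1 / ((n : ℝ) + 1) := by
  rw [apply_of_le (by omega) hnN, Nat.cast_succ]
  have hx : (0 : ℝ) < n + 1 := by positivity
  rw [← Real.rpow_mul_natCast hx.le, ← Real.rpow_natCast _ 2, ← Real.rpow_natCast _ (2 * k),
    ← Real.rpow_sub hx, ← Real.rpow_add hx, one_div, ← Real.rpow_neg_one]
  push_cast
  ring_nf

lemma powerWeightEnergy_le (hk : 1 ≤ k) (hN : 1 ≤ N) :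
    powerWeightEnergy k (hardyTestSeq k N) (N ^ 2 + 1)
      ≤ (2 * (k : ℝ) - 1) ^ 2 / 4 * ∑ i ∈ range N, 1 / ((i : ℝ) + 1)
        + (1 + 2 * (2 * (k : ℝ) - 1) ^ 2 / 4 * 4 ^ k + 2 * ((k : ℝ) + 1) ^ 2 * 4 ^ k + 4 ^ k) := by
  set F : ℕ → ℝ := fun n ↦
    (hardyTestSeq k N (n + 1) - hardyTestSeq k N n) ^ 2 * ((n : ℝ) + 1) ^ (2 * k)
  have hsplit : powerWeightEnergy k (hardyTestSeq k N) (N ^ 2 + 1)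
      = F 0 + ∑ n ∈ Ico 1 N, F n + ∑ n ∈ Ico N (N ^ 2), F n + F (N ^ 2) := by
    rw [powerWeightEnergy, sum_range_succ,
      ← sum_range_add_sum_Ico _ (Nat.le_self_pow two_ne_zero N), range_eq_Ico,
      sum_eq_sum_Ico_succ_bot hN]
  have hF0 : F 0 = 1 := by simp [F, apply_zero, apply_of_le le_rfl hN]
  have hmain : ∑ n ∈ Ico 1 N, F n
      ≤ (2 * (k : ℝ) - 1) ^ 2 / 4 * (∑ i ∈ range N, 1 / ((i : ℝ) + 1) + 4 ^ k * 2) := by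
    have hharm : ∑ n ∈ Ico 1 N, (n : ℝ)⁻¹ ≤ ∑ i ∈ range N, 1 / ((i : ℝ) + 1) := by
      rw [sum_Ico_eq_sum_range]
      refine (sum_le_sum fun i _ ↦ ?_).trans
        (sum_le_sum_of_subset_of_nonneg (range_mono (N.sub_le 1)) fun _ _ _ ↦ by positivity)
      push_cast
      rw [add_comm, one_div]
    calc ∑ n ∈ Ico 1 N, F n
        ≤ ∑ n ∈ Ico 1 N, (2 * (k : ℝ) - 1) ^ 2 / 4 * ((n : ℝ)⁻¹ + 4 ^ k * ((n : ℝ) ^ 2)⁻¹) :=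
          sum_le_sum fun n hn ↦ energy_term_le_of_lt hk (mem_Ico.1 hn).1 (mem_Ico.1 hn).2
      _ = (2 * (k : ℝ) - 1) ^ 2 / 4
            * (∑ n ∈ Ico 1 N, (n : ℝ)⁻¹ + 4 ^ k * ∑ n ∈ Ico 1 N, ((n : ℝ) ^ 2)⁻¹) := by
          rw [← mul_sum, sum_add_distrib, ← mul_sum]
      _ ≤ _ := by
          gcongr
          simpa using sum_Ico_inv_sq_le le_rfl N
  have htail : ∑ n ∈ Ico N (N ^ 2), F n ≤ 2 * ((k : ℝ) + 1) ^ 2 * 4 ^ k := by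
    have hN' : (0 : ℝ) < N := by exact_mod_cast hN
    calc ∑ n ∈ Ico N (N ^ 2), F n
        ≤ ∑ n ∈ Ico N (N ^ 2), ((k : ℝ) + 1) ^ 2 * 4 ^ k * (N * ((n : ℝ) ^ 2)⁻¹) :=
          sum_le_sum fun n hn ↦ energy_term_le_of_ge hN (mem_Ico.1 hn).1 (mem_Ico.1 hn).2
      _ = ((k : ℝ) + 1) ^ 2 * 4 ^ k * (N * ∑ n ∈ Ico N (N ^ 2), ((n : ℝ) ^ 2)⁻¹) := by
          rw [← mul_sum, ← mul_sum]
      _ ≤ ((k : ℝ) + 1) ^ 2 * 4 ^ k * (N * (2 / N)) := by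
          gcongr
          exact sum_Ico_inv_sq_le hN _
      _ = 2 * ((k : ℝ) + 1) ^ 2 * 4 ^ k := by field_simp
  have hcut : F (N ^ 2) ≤ 4 ^ k := energy_term_cutoff_le hN
  rw [hsplit]
  linarith

lemma harmonic_le_powerWeightMass (hN : 1 ≤ N) :
    ∑ i ∈ range N, 1 / ((i : ℝ) + 1) ≤ powerWeightMass k (hardyTestSeq k N) (N ^ 2 + 1) := by
  rw [powerWeightMass, ← sum_congr rfl fun n hn ↦ mass_term_eq (k := k) (mem_range.1 hn)]
  exact sum_le_sum_of_subset_of_nonneg (range_mono (by nlinarith)) fun _ _ _ ↦ by positivity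

end hardyTestSeq

theorem power_weight_hardy_sharp
    (k : ℕ) (hk : 1 ≤ k) (c : ℝ) (hc : c > (2 * (k : ℝ) - 1) ^ 2 / 4) :
    ∃ u : ℕ → ℂ, (Function.support u).Finite ∧ u 0 = 0 ∧
      ∑' n : ℕ, ‖u (n + 1) - u n‖ ^ 2 * ((n : ℝ) + 1) ^ (2 * k) <
        c * ∑' n : ℕ, (‖u (n + 1)‖ ^ 2 / ((n : ℝ) + 1) ^ 2) * ((n : ℝ) + 1) ^ (2 * k) := by
  set B : ℝ := 1 + 2 * (2 * (k : ℝ) - 1) ^ 2 / 4 * 4 ^ k + 2 * ((k : ℝ) + 1) ^ 2 * 4 ^ k + 4 ^ k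
  obtain ⟨N, hNB, hN⟩ : ∃ N : ℕ,
      B / (c - (2 * (k : ℝ) - 1) ^ 2 / 4) < ∑ i ∈ range N, 1 / ((i : ℝ) + 1) ∧ 1 ≤ N :=
    ((Real.tendsto_sum_range_one_div_nat_succ_atTop.eventually_gt_atTop _).and
      (eventually_ge_atTop 1)).exists
  have hvanish : ∀ n, N ^ 2 < n → hardyTestSeq k N n = 0 := fun _ ↦ hardyTestSeq.apply_of_gt
  refine ⟨fun n ↦ (hardyTestSeq k N n : ℂ), ?_, by simp [hardyTestSeq.apply_zero], ?_⟩
  · refine (finite_toSet (range (N ^ 2 + 1))).subset fun n hn ↦ ?_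
    rw [mem_coe, mem_range]
    by_contra! hout
    exact hn (by simp [hvanish n (by omega)])
  · rw [tsum_norm_sub_sq_mul_eq_powerWeightEnergy k hvanish,
      tsum_norm_sq_div_mul_eq_powerWeightMass k hvanish]
    have hgap := (div_lt_iff₀ (sub_pos.2 hc)).1 hNB
    calc _ ≤ (2 * (k : ℝ) - 1) ^ 2 / 4 * ∑ i ∈ range N, 1 / ((i : ℝ) + 1) + B :=
          hardyTestSeq.powerWeightEnergy_le hk hN
      _ < c * ∑ i ∈ range N, 1 / ((i : ℝ) + 1) := by linarith
      _ ≤ _ := mul_le_mul_of_nonneg_left (hardyTestSeq.harmonic_le_powerWeightMass hN)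
          ((by positivity : (0 : ℝ) ≤ (2 * k - 1) ^ 2 / 4).trans hc.le)
end

section
/- (Discrete Rellich inequality.) For every finitely supported function u : ℤ → ℂ with u(n) = 0 for all n ≤ 1, one has ∑_{n=1}^{∞} |2u(n) − u(n+1) − u(n−1)|² ≥ (1/2) · ∑_{n=1}^{∞} |u(n)|²/n⁴. -/
/-!
Writing `Δh n = h (n + 1) - h n`, the inequality is the composite of two discrete Hardy
inequalities for functions vanishing at the start: `(1/4) ∑ ‖g n‖² / n² ≤ ∑ ‖Δg n‖²`, applied to
`g = Δu`, and `2 ∑ ‖u n‖² / n⁴ ≤ ∑ ‖Δu n‖² / n²`. Both are telescoping (ground-state) arguments: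
`(1 - β) ‖x‖² + (1 - β⁻¹) ‖y‖² ≤ ‖x - y‖²` with `β = 2n / (2n + 1)`, resp. `β = n² / (n + 1)²`,
bounds the `n`-th term on the right from below by the `n`-th term on the left plus the increment
`c (n + 1) - c n` of `c n = ‖g n‖² / (2n - 1)`, resp. `c n = (2n - 1) ‖u n‖² / ((n - 1)² n²)`,
and the boundary term `c N` left after summation is nonnegative.
-/

open Finset

theorem sum_range_add_sub_le_of_forall_le (a b c : ℕ → ℝ)
    (hstep : ∀ n, b n + (c (n + 1) - c n) ≤ a n) (N : ℕ) :
    ∑ n ∈ range N, b n + (c N - c 0) ≤ ∑ n ∈ range N, a n := by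
  rw [← sum_range_sub, ← sum_add_distrib]
  exact sum_le_sum fun n _ => hstep n

section Hardy

variable {E : Type*} [SeminormedAddCommGroup E]

theorem norm_sub_sq_ge (x y : E) {β : ℝ} (hβ : 0 < β) :
    (1 - β) * ‖x‖ ^ 2 + (1 - β⁻¹) * ‖y‖ ^ 2 ≤ ‖x - y‖ ^ 2 := by
  have hsq : (‖x‖ - ‖y‖) ^ 2 ≤ ‖x - y‖ ^ 2 := by
    rw [← sq_abs]
    exact pow_le_pow_left₀ (abs_nonneg _) (abs_norm_sub_norm_le x y) 2
  have hβy : 0 ≤ β⁻¹ * (β * ‖x‖ - ‖y‖) ^ 2 := by positivity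
  have hexp : β⁻¹ * (β * ‖x‖ - ‖y‖) ^ 2 = β * ‖x‖ ^ 2 - 2 * ‖x‖ * ‖y‖ + β⁻¹ * ‖y‖ ^ 2 := by
    field_simp
    ring
  nlinarith

theorem hardy_step {t : ℝ} (ht : 1 / 2 < t) (x y : E) :
    1 / 4 * (‖y‖ ^ 2 / t ^ 2) + (‖x‖ ^ 2 / (2 * (t + 1) - 1) - ‖y‖ ^ 2 / (2 * t - 1)) ≤
      ‖x - y‖ ^ 2 := by
  have ht0 : 0 < t := by linarith
  have hβ := norm_sub_sq_ge x y (β := 2 * t / (2 * t + 1)) (by positivity)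
  have h1 : 1 - 2 * t / (2 * t + 1) = 1 / (2 * t + 1) := by
    field_simp
    ring
  have h2 : 1 - (2 * t / (2 * t + 1))⁻¹ = -1 / (2 * t) := by
    field_simp
    ring
  have hcoeff : 1 / 4 * (1 / t ^ 2) - 1 / (2 * t - 1) ≤ -1 / (2 * t) := by
    have h2t : 0 < 2 * t - 1 := by linarith
    have hgap : -1 / (2 * t) - (1 / 4 * (1 / t ^ 2) - 1 / (2 * t - 1)) =
        1 / (4 * t ^ 2 * (2 * t - 1)) := by
      field_simp
      ring
    have : 0 ≤ 1 / (4 * t ^ 2 * (2 * t - 1)) := by positivity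
    linarith
  rw [h1, h2] at hβ
  rw [show 2 * (t + 1) - 1 = 2 * t + 1 by ring]
  have hy := mul_le_mul_of_nonneg_right hcoeff (sq_nonneg ‖y‖)
  have ey : 1 / 4 * (‖y‖ ^ 2 / t ^ 2) - ‖y‖ ^ 2 / (2 * t - 1) =
      (1 / 4 * (1 / t ^ 2) - 1 / (2 * t - 1)) * ‖y‖ ^ 2 := by ring
  have ex : ‖x‖ ^ 2 / (2 * t + 1) = 1 / (2 * t + 1) * ‖x‖ ^ 2 := by ring
  linarith

theorem hardy_sum_le (g : ℕ → E) (hg : g 0 = 0) (N : ℕ) :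
    1 / 4 * ∑ n ∈ range N, ‖g n‖ ^ 2 / (n : ℝ) ^ 2 ≤ ∑ n ∈ range N, ‖g (n + 1) - g n‖ ^ 2 := by
  set c : ℕ → ℝ := fun n => ‖g n‖ ^ 2 / (2 * n - 1)
  have hstep (n : ℕ) :
      1 / 4 * (‖g n‖ ^ 2 / (n : ℝ) ^ 2) + (c (n + 1) - c n) ≤ ‖g (n + 1) - g n‖ ^ 2 := by
    rcases n with _ | n
    · norm_num [c, hg]
    · have := hardy_step (t := ((n + 1 : ℕ) : ℝ)) (by push_cast; linarith [n.cast_nonneg (α := ℝ)])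
        (g (n + 1 + 1)) (g (n + 1))
      simpa [c] using this
  have hc0 : c 0 = 0 := by simp [c, hg]
  have hcN : 0 ≤ c N := by
    rcases N with _ | N
    · exact hc0.ge
    · exact div_nonneg (sq_nonneg _) (by push_cast; linarith [N.cast_nonneg (α := ℝ)])
  have := sum_range_add_sub_le_of_forall_le _ _ c hstep N
  rw [mul_sum]
  linarith

theorem weighted_hardy_step {t : ℝ} (ht : 1 < t) (x y : E) :
    2 * (‖y‖ ^ 2 / t ^ 4) + ((2 * t + 1) / (t ^ 2 * (t + 1) ^ 2) * ‖x‖ ^ 2 -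
      (2 * t - 1) / ((t - 1) ^ 2 * t ^ 2) * ‖y‖ ^ 2) ≤ ‖x - y‖ ^ 2 / t ^ 2 := by
  have ht0 : 0 < t := by linarith
  have hβ := norm_sub_sq_ge x y (β := t ^ 2 / (t + 1) ^ 2) (by positivity)
  have h1 : 1 - t ^ 2 / (t + 1) ^ 2 = (2 * t + 1) / (t + 1) ^ 2 := by
    field_simp
    ring
  have h2 : 1 - (t ^ 2 / (t + 1) ^ 2)⁻¹ = -(2 * t + 1) / t ^ 2 := by
    field_simp
    ring
  rw [h1, h2] at hβ
  have hcoeff : 2 / t ^ 4 - (2 * t - 1) / ((t - 1) ^ 2 * t ^ 2) ≤ -(2 * t + 1) / t ^ 4 := by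
    have ht1 : t - 1 ≠ 0 := by linarith
    have hgap : -(2 * t + 1) / t ^ 4 - (2 / t ^ 4 - (2 * t - 1) / ((t - 1) ^ 2 * t ^ 2)) =
        (4 * t - 3) / ((t - 1) ^ 2 * t ^ 4) := by
      field_simp
      ring
    have : 0 ≤ (4 * t - 3) / ((t - 1) ^ 2 * t ^ 4) := div_nonneg (by linarith) (by positivity)
    linarith
  have hy := mul_le_mul_of_nonneg_right hcoeff (sq_nonneg ‖y‖)
  have hscaled := div_le_div_of_nonneg_right hβ (sq_nonneg t)
  have ey : 2 * (‖y‖ ^ 2 / t ^ 4) - (2 * t - 1) / ((t - 1) ^ 2 * t ^ 2) * ‖y‖ ^ 2 =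
      (2 / t ^ 4 - (2 * t - 1) / ((t - 1) ^ 2 * t ^ 2)) * ‖y‖ ^ 2 := by ring
  have exy : ((2 * t + 1) / (t + 1) ^ 2 * ‖x‖ ^ 2 + -(2 * t + 1) / t ^ 2 * ‖y‖ ^ 2) / t ^ 2 =
      (2 * t + 1) / (t ^ 2 * (t + 1) ^ 2) * ‖x‖ ^ 2 + -(2 * t + 1) / t ^ 4 * ‖y‖ ^ 2 := by
    field_simp
  linarith

theorem weighted_hardy_sum_le (f : ℕ → E) (h0 : f 0 = 0) (h1 : f 1 = 0) (N : ℕ) :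
    2 * ∑ n ∈ range N, ‖f n‖ ^ 2 / (n : ℝ) ^ 4 ≤
      ∑ n ∈ range N, ‖f (n + 1) - f n‖ ^ 2 / (n : ℝ) ^ 2 := by
  set c : ℕ → ℝ := fun n => (2 * n - 1) / ((n - 1) ^ 2 * n ^ 2) * ‖f n‖ ^ 2
  have hstep (n : ℕ) :
      2 * (‖f n‖ ^ 2 / (n : ℝ) ^ 4) + (c (n + 1) - c n) ≤ ‖f (n + 1) - f n‖ ^ 2 / (n : ℝ) ^ 2 := by
    rcases n with _ | _ | n
    · simp [c, h0, h1]
    · norm_num [c, h1]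
      nlinarith [sq_nonneg ‖f 2‖]
    · have := weighted_hardy_step (t := ((n + 2 : ℕ) : ℝ))
        (by push_cast; linarith [n.cast_nonneg (α := ℝ)]) (f (n + 2 + 1)) (f (n + 2))
      convert this using 3
      simp only [c]
      push_cast
      ring
  have hc0 : c 0 = 0 := by simp [c, h0]
  have hcN : 0 ≤ c N := by
    rcases N with _ | _ | N
    · exact hc0.ge
    · simp [c, h1]
    · exact mul_nonneg (div_nonneg (by push_cast; linarith [N.cast_nonneg (α := ℝ)])
        (by positivity)) (sq_nonneg _)
  have := sum_range_add_sub_le_of_forall_le _ _ c hstep N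
  rw [mul_sum]
  linarith

theorem rellich_sum_le (v : ℕ → E) (h0 : v 0 = 0) (h1 : v 1 = 0) (N : ℕ) :
    1 / 2 * ∑ n ∈ range N, ‖v n‖ ^ 2 / (n : ℝ) ^ 4 ≤
      ∑ n ∈ range N, ‖(v (n + 2) - v (n + 1)) - (v (n + 1) - v n)‖ ^ 2 := by
  set g : ℕ → E := fun n => v (n + 1) - v n
  calc 1 / 2 * ∑ n ∈ range N, ‖v n‖ ^ 2 / (n : ℝ) ^ 4
      = 1 / 4 * (2 * ∑ n ∈ range N, ‖v n‖ ^ 2 / (n : ℝ) ^ 4) := by ring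
    _ ≤ 1 / 4 * ∑ n ∈ range N, ‖g n‖ ^ 2 / (n : ℝ) ^ 2 := by
      gcongr
      exact weighted_hardy_sum_le v h0 h1 N
    _ ≤ ∑ n ∈ range N, ‖g (n + 1) - g n‖ ^ 2 := hardy_sum_le g (by simp [g, h0, h1]) N

end Hardy

theorem exists_natCast_forall_ge_eq_zero {M : Type*} [Zero M] {u : ℤ → M}
    (hu : (Function.support u).Finite) : ∃ N : ℕ, ∀ n : ℤ, N ≤ n → u n = 0 := by
  obtain ⟨B, hB⟩ := hu.bddAbove
  refine ⟨B.toNat + 1, fun n hn => ?_⟩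
  by_contra hne
  have hle : n ≤ B := hB hne
  have := Int.self_le_toNat B
  omega

theorem discrete_rellich
    (u : ℤ → ℂ) (hu : (Function.support u).Finite)
    (h0 : ∀ n : ℤ, n ≤ 1 → u n = 0) :
    ∑' n : ℕ, ‖2 * u ((n : ℤ) + 1) - u ((n : ℤ) + 2) - u (n : ℤ)‖ ^ 2 ≥
      (1 / 2 : ℝ) * ∑' n : ℕ, ‖u ((n : ℤ) + 1)‖ ^ 2 / ((n : ℝ) + 1) ^ 4 := by
  obtain ⟨N, hN⟩ := exists_natCast_forall_ge_eq_zero hu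
  set v : ℕ → ℂ := fun n => u n
  have hL : ∑' n : ℕ, ‖2 * u ((n : ℤ) + 1) - u ((n : ℤ) + 2) - u (n : ℤ)‖ ^ 2 =
      ∑ n ∈ range (N + 1), ‖(v (n + 2) - v (n + 1)) - (v (n + 1) - v n)‖ ^ 2 := by
    rw [tsum_eq_sum fun n hn => ?_]
    · refine sum_congr rfl fun n _ => ?_
      rw [← norm_neg]
      simp only [v]
      push_cast
      congr 2
      ring
    · simp only [mem_range, not_lt] at hn
      rw [hN n (by omega), hN (n + 1) (by omega), hN (n + 2) (by omega)]
      simp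
  have hR : ∑' n : ℕ, ‖u ((n : ℤ) + 1)‖ ^ 2 / ((n : ℝ) + 1) ^ 4 =
      ∑ n ∈ range (N + 1), ‖v n‖ ^ 2 / (n : ℝ) ^ 4 := by
    rw [sum_range_succ', tsum_eq_sum (s := range N) fun n hn => ?_]
    · simp [v]
    · simp only [mem_range, not_lt] at hn
      rw [hN (n + 1) (by omega)]
      simp
  rw [ge_iff_le, hL, hR]
  exact rellich_sum_le v (h0 0 (by norm_num)) (h0 1 le_rfl) (N + 1)
end

section
/- Let u : ℝ → ℂ be a smooth 2π-periodic function with zero average, i.e. ∫_{−π}^{π} u(x) dx = 0. Then ∫_{−π}^{π} |u'(x)|² sin²(x/2) dx ≥ (1/16) ∫_{−π}^{π} |u(x)|² dx. -/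
set_option maxHeartbeats 1000000
open MeasureTheory Real Set intervalIntegral

lemma hardy_aux1 (a b s c : ℝ) (hs : s ≠ 0) (hpyth : s^2 + c^2 = 1) :
    2*(c/(4*s))*(a*b) - a^2/(8*s^2) + 1/16*((a/s)^2) ≤ b^2 := by
  have key : 2*(c/(4*s))*(a*b) - a^2/(8*s^2) + (1/16)*((a/s)^2)
      = b^2 - ((b - (c/(4*s))*a)^2 + (1/16)*a^2) := by
    field_simp
    ring_nf
    linear_combination (128*a^2) * hpyth
  rw [show (1:ℝ)/16*((a/s)^2) = (1/16 : ℝ)*((a/s)^2) by norm_num] at *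
  rw [key]
  nlinarith [sq_nonneg (b - (c/(4*s))*a), sq_nonneg a]

lemma hardy_aux2 (a d s : ℝ) (hs : s ≠ 0) :
    -(a*d) ≤ 1/32*((a/s)^2) + 8*d^2*s^2 := by
  have key : (1/32)*((a/s)^2) + 8*d^2*s^2 + a*d = (1/32)*(a/s + 16*d*s)^2 := by
    field_simp
    ring
  nlinarith [sq_nonneg (a/s + 16*d*s)]

lemma hardy_real (f : ℝ → ℝ) (hf : ContDiff ℝ (⊤ : ℕ∞) f)
    (hper : Function.Periodic f (2 * Real.pi))
    (hmean : ∫ x in (-Real.pi)..Real.pi, f x = 0) :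
    (1/16 : ℝ) * ∫ x in (-Real.pi)..Real.pi, f x ^ 2 ≤
      ∫ x in (-Real.pi)..Real.pi, deriv f x ^ 2 * Real.sin (x/2) ^ 2 := by
  have pi_pos := Real.pi_pos
  have hfc : Continuous f := hf.continuous
  have hf'c : Continuous (deriv f) := hf.continuous_deriv (by simp)
  have hfd : ∀ x, HasDerivAt f (deriv f x) x := fun x => (hf.differentiable (by simp) x).hasDerivAt
  set U : ℝ → ℝ := fun x => ∫ t in (0:ℝ)..x, f t with hUdef
  have hU : ∀ x, HasDerivAt U (f x) x := fun x =>
    intervalIntegral.integral_hasDerivAt_right (hfc.intervalIntegrable _ _)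
      (hfc.stronglyMeasurableAtFilter _ _) hfc.continuousAt
  have hUc : Continuous U := by
    rw [continuous_iff_continuousAt]; exact fun x => (hU x).continuousAt
  have hU0 : U 0 = 0 := intervalIntegral.integral_same
  -- sup bound
  obtain ⟨M, hM⟩ : ∃ M, ∀ x ∈ Icc (-π) π, |f x| ≤ M := by
    obtain ⟨M, hM⟩ := isCompact_Icc.exists_bound_of_continuousOn (f := f) hfc.continuousOn
    exact ⟨M, fun x hx => hM x hx⟩
  have hM0 : 0 ≤ M := le_trans (abs_nonneg _) (hM 0 (by constructor <;> linarith))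
  have hUb : ∀ x ∈ Icc (-π) π, |U x| ≤ M * |x| := by
    intro x hx
    have hsub : Set.uIoc (0:ℝ) x ⊆ Icc (-π) π := by
      refine Set.Subset.trans Set.Ioc_subset_Icc_self
        (Set.Icc_subset_Icc (le_min (by linarith) hx.1) (max_le (by linarith) hx.2))
    have := intervalIntegral.norm_integral_le_of_norm_le_const (C := M) (f := f)
      (a := 0) (b := x) (fun t ht => hM t (hsub ht))
    simpa using this
  -- Jordan
  have hlb : ∀ x ∈ Icc (-π) π, |x| / π ≤ |Real.sin (x/2)| := by
    intro x hx
    have h0 : |x| ≤ π := abs_le.2 ⟨hx.1, hx.2⟩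
    have h1 : |x/2| ≤ π/2 := by rw [abs_div, abs_two]; linarith
    calc |x|/π = 2/π * |x/2| := by rw [abs_div, abs_two]; ring
    _ ≤ _ := Real.mul_abs_le_abs_sin h1
  have hlb2 : ∀ x ∈ Icc (-π) π, x^2 / π^2 ≤ Real.sin (x/2)^2 := by
    intro x hx
    calc x^2/π^2 = (|x|/π)^2 := by rw [div_pow, sq_abs]
    _ ≤ _ := by rw [← sq_abs (Real.sin (x/2))]; exact pow_le_pow_left₀ (by positivity) (hlb x hx) 2
  have hsne : ∀ x ∈ Icc (-π) π, x ≠ 0 → Real.sin (x/2) ≠ 0 := by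
    intro x hx hx0
    intro h
    have := hlb x hx
    rw [h] at this
    simp only [abs_zero] at this
    have h2 := div_pos (abs_pos.2 hx0) pi_pos
    linarith
  -- multiplier and its derivative
  set W : ℝ → ℝ := fun x => Real.cos (x/2) / (4 * Real.sin (x/2)) with hWdef
  set φ : ℝ → ℝ := fun x => W x * (U x)^2 with hphidef
  set F : ℝ → ℝ := fun x => 2 * W x * (U x * f x) - (U x)^2 / (8 * Real.sin (x/2)^2) with hFdef
  have hWderiv : ∀ x, Real.sin (x/2) ≠ 0 → HasDerivAt W (-(1/(8 * Real.sin (x/2)^2))) x := by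
    intro x hs
    have hhalf : HasDerivAt (fun y : ℝ => y/2) (1/2) x := (hasDerivAt_id x).div_const 2
    have hc : HasDerivAt (fun y : ℝ => Real.cos (y/2)) (-Real.sin (x/2) * (1/2)) x :=
      by have h := (Real.hasDerivAt_cos (x/2)).comp x hhalf; exact h
    have hs' : HasDerivAt (fun y : ℝ => 4 * Real.sin (y/2)) (4 * (Real.cos (x/2) * (1/2))) x :=
      by have h := (((Real.hasDerivAt_sin (x/2)).comp x hhalf)).const_mul 4; exact h
    have hden : 4 * Real.sin (x/2) ≠ 0 := by
      intro h; apply hs; linarith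
    have hpyth := Real.sin_sq_add_cos_sq (x/2)
    have key : -Real.sin (x/2) * (1/2) * (4*Real.sin (x/2))
        - Real.cos (x/2) * (4*(Real.cos (x/2)*(1/2))) = -2 := by linear_combination -2*hpyth
    have := hc.fun_div hs' hden
    rw [key] at this
    refine this.congr_deriv ?_
    field_simp
    ring
  have hphi' : ∀ x, Real.sin (x/2) ≠ 0 → HasDerivAt φ (F x) x := by
    intro x hs
    have h1 : HasDerivAt (fun y => (U y)^2) (2 * U x * f x) x := by
      have := (hU x).fun_pow 2
      simpa using this
    have := (hWderiv x hs).fun_mul h1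
    refine this.congr_deriv ?_
    simp only [hFdef]
    field_simp
    ring
  set G : ℝ → ℝ := fun x => (U x / Real.sin (x/2))^2 with hGdef
  -- bound on U/s
  have hVb : ∀ x ∈ Icc (-π) π, |U x / Real.sin (x/2)| ≤ π * M := by
    intro x hx
    by_cases hx0 : x = 0
    · rw [hx0, hU0]
      simp only [zero_div, abs_zero]
      positivity
    · rw [abs_div]
      have h1 : |U x| ≤ M * |x| := hUb x hx
      have h2 : |x|/π ≤ |Real.sin (x/2)| := hlb x hx
      have hxpos : 0 < |x| := abs_pos.2 hx0
      have hspos : 0 < |Real.sin (x/2)| := lt_of_lt_of_le (by positivity) h2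
      rw [div_le_iff₀ hspos]
      calc |U x| ≤ M*|x| := h1
      _ = (π*M) * (|x|/π) := by field_simp
      _ ≤ (π*M)*|Real.sin (x/2)| := by gcongr
  have hGb : ∀ x ∈ Icc (-π) π, |G x| ≤ (π*M)^2 := by
    intro x hx
    have h := hVb x hx
    calc |G x| = (U x / Real.sin (x/2))^2 := abs_of_nonneg (sq_nonneg _)
    _ = |U x / Real.sin (x/2)|^2 := (sq_abs _).symm
    _ ≤ (π*M)^2 := pow_le_pow_left₀ (abs_nonneg _) h 2
  -- bound on F
  set C : ℝ := π*M*M/2 + (π*M)^2/8 with hCdef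
  have hFb : ∀ x ∈ Icc (-π) π, |F x| ≤ C := by
    intro x hx
    by_cases hx0 : x = 0
    · have : F x = 0 := by
        rw [hx0]
        simp [hFdef, hU0]
      rw [this, abs_zero, hCdef]
      positivity
    · have hs := hsne x hx hx0
      have hrw : F x = Real.cos (x/2) * (U x/Real.sin (x/2)) * f x / 2
          - (U x/Real.sin (x/2))^2 / 8 := by
        simp only [hFdef, hWdef]
        field_simp
        ring
      have hv := hVb x hx
      have hfx := hM x hx
      have hcx : |Real.cos (x/2)| ≤ 1 := Real.abs_cos_le_one _
      have h1 : |Real.cos (x/2) * (U x/Real.sin (x/2)) * f x / 2| ≤ π*M*M/2 := by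
        rw [abs_div, abs_mul, abs_mul, abs_two]
        have : |Real.cos (x/2)| * |U x/Real.sin (x/2)| * |f x| ≤ 1 * (π*M) * M := by
          gcongr <;> positivity
        linarith
      have h2 : |(U x/Real.sin (x/2))^2 / 8| ≤ (π*M)^2/8 := by
        rw [abs_div, abs_pow]
        have : |(8:ℝ)| = 8 := by norm_num
        rw [this]
        gcongr
      calc |F x| ≤ |Real.cos (x/2) * (U x/Real.sin (x/2)) * f x / 2|
          + |(U x/Real.sin (x/2))^2 / 8| := by
            rw [hrw, sub_eq_add_neg]
            exact (abs_add_le _ _).trans (by rw [abs_neg])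
      _ ≤ C := by rw [hCdef]; linarith
  -- integrability helper
  have intable : ∀ (g : ℝ → ℝ) (Cg : ℝ), Measurable g → (∀ x ∈ Icc (-π) π, |g x| ≤ Cg) →
      ∀ a b, a ∈ Icc (-π) π → b ∈ Icc (-π) π → IntervalIntegrable g volume a b := by
    intro g Cg mg hg a b ha hb
    rw [intervalIntegrable_iff]
    apply MeasureTheory.Measure.integrableOn_of_bounded (M := Cg)
      measure_Ioc_lt_top.ne mg.aestronglyMeasurable
    filter_upwards [MeasureTheory.ae_restrict_mem measurableSet_uIoc] with x hxm
    have hxIcc : x ∈ Icc (-π) π := by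
      have h1 : Set.uIoc a b ⊆ Icc (-π) π := by
        refine Set.Subset.trans Set.Ioc_subset_Icc_self
          (Set.Icc_subset_Icc (le_min ha.1 hb.1) (max_le ha.2 hb.2))
      exact h1 hxm
    simpa using hg x hxIcc
  have mhalf : Measurable fun y : ℝ => Real.sin (y/2) :=
    (Real.continuous_sin.comp (continuous_id.div_const 2)).measurable
  have mW : Measurable W :=
    ((Real.continuous_cos.comp (continuous_id.div_const 2)).measurable).div
      ((continuous_const.mul (Real.continuous_sin.comp (continuous_id.div_const 2))).measurable)
  have mF : Measurable F := by
    apply Measurable.sub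
    · exact (measurable_const.mul mW).mul (hUc.measurable.mul hfc.measurable)
    · exact (hUc.measurable.pow_const 2).div
        (measurable_const.mul (mhalf.pow_const 2))
  have mG : Measurable G := ((hUc.measurable).div mhalf).pow_const 2
  have hmem0 : (0:ℝ) ∈ Icc (-π) π := by constructor <;> linarith
  have hmemp : π ∈ Icc (-π) π := by constructor <;> linarith
  have hmemn : -π ∈ Icc (-π) π := by constructor <;> linarith
  -- φ values
  have hφ0 : φ 0 = 0 := by simp [hphidef, hU0]
  have hφp : φ π = 0 := by
    have : Real.cos (π/2) = 0 := Real.cos_pi_div_two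
    simp [hphidef, hWdef, this]
  have hφn : φ (-π) = 0 := by
    have h1 : (-π)/2 = -(π/2) := by ring
    simp [hphidef, hWdef, h1, Real.cos_pi_div_two]
  -- continuity of φ on Icc
  have hφcont : ContinuousOn φ (Icc (-π) π) := by
    intro x hx
    by_cases hx0 : x = 0
    · subst hx0
      rw [ContinuousWithinAt, hφ0]
      apply squeeze_zero_norm' (a := fun x => π*M^2/4 * |x|)
      · filter_upwards [self_mem_nhdsWithin] with y hy
        by_cases hy0 : y = 0
        · simp [hy0, hφ0]
        · have hs := hsne y hy hy0
          have hypos : 0 < |y| := abs_pos.2 hy0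
          have h2 : |y|/π ≤ |Real.sin (y/2)| := hlb y hy
          have hspos : 0 < |Real.sin (y/2)| := lt_of_lt_of_le (by positivity) h2
          have hWb : |W y| ≤ π/(4*|y|) := by
            rw [hWdef]
            simp only
            rw [abs_div, abs_mul]
            have h4 : |(4:ℝ)| = 4 := by norm_num
            rw [h4, div_le_div_iff₀ (by positivity) (by positivity)]
            calc |Real.cos (y/2)| * (4*|y|) ≤ 1 * (4*|y|) := by
                  gcongr; exact Real.abs_cos_le_one _
            _ = 4*|y| := by ring
            _ ≤ π * (4*|Real.sin (y/2)|) := by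
                  rw [div_le_iff₀ pi_pos] at h2
                  linarith
          have hUy : |U y| ≤ M*|y| := hUb y hy
          calc ‖φ y‖ = |W y| * |U y|^2 := by
                rw [hphidef]; simp only [Real.norm_eq_abs, abs_mul, abs_pow]
          _ ≤ (π/(4*|y|)) * (M*|y|)^2 := by
                gcongr
          _ = π*M^2/4 * |y| := by field_simp
      · have ht : Filter.Tendsto (fun x : ℝ => π*M^2/4 * |x|) (nhds 0) (nhds 0) := by
          have h := ((continuous_const (y := π*M^2/4)).fun_mul continuous_abs).tendsto (0:ℝ)
          simpa using h
        exact ht.mono_left nhdsWithin_le_nhds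
    · apply ContinuousAt.continuousWithinAt
      have hs := hsne x hx hx0
      have hWc : ContinuousAt W x := by
        apply ContinuousAt.div
        · exact (Real.continuous_cos.comp (continuous_id.div_const 2)).continuousAt
        · exact (continuous_const.mul
            (Real.continuous_sin.comp (continuous_id.div_const 2))).continuousAt
        · simpa using fun h => hs (by linarith)
      exact hWc.mul ((hUc.pow 2).continuousAt)
  -- FTC for φ on the two halves
  have hFint1 : IntervalIntegrable F volume 0 π := intable F C mF hFb 0 π hmem0 hmemp
  have hFint2 : IntervalIntegrable F volume (-π) 0 := intable F C mF hFb (-π) 0 hmemn hmem0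
  have hFTC1 : ∫ x in (0:ℝ)..π, F x = 0 := by
    rw [intervalIntegral.integral_eq_sub_of_hasDerivAt_of_le pi_pos.le
      (hφcont.mono (Icc_subset_Icc (by linarith) le_rfl))
      (fun x hx => hphi' x (hsne x ⟨by linarith [hx.1], hx.2.le⟩ (ne_of_gt hx.1))) hFint1]
    rw [hφp, hφ0, sub_zero]
  have hFTC2 : ∫ x in (-π)..(0:ℝ), F x = 0 := by
    rw [intervalIntegral.integral_eq_sub_of_hasDerivAt_of_le (by linarith)
      (hφcont.mono (Icc_subset_Icc le_rfl (by linarith)))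
      (fun x hx => hphi' x (hsne x ⟨hx.1.le, by linarith [hx.2]⟩ (ne_of_lt hx.2))) hFint2]
    rw [hφn, hφ0, sub_zero]
  -- pointwise Hardy inequality
  have hA2 : ∀ x ∈ Icc (-π) π, F x + (1/16)*G x ≤ f x^2 := by
    intro x hx
    by_cases hx0 : x = 0
    · have hF0 : F x = 0 := by rw [hx0]; simp [hFdef, hU0]
      have hG0 : G x = 0 := by rw [hx0]; simp [hGdef, hU0]
      rw [hF0, hG0]
      simp
      positivity
    · have hs := hsne x hx hx0
      have hpyth := Real.sin_sq_add_cos_sq (x/2)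
      have := hardy_aux1 (U x) (f x) (Real.sin (x/2)) (Real.cos (x/2)) hs hpyth
      simp only [hFdef, hGdef, hWdef]
      convert this using 2 <;> ring
  -- integral Hardy inequality
  have hGint1 : IntervalIntegrable G volume 0 π := intable G ((π*M)^2) mG hGb 0 π hmem0 hmemp
  have hGint2 : IntervalIntegrable G volume (-π) 0 := intable G ((π*M)^2) mG hGb (-π) 0 hmemn hmem0
  have hf2int : ∀ a b : ℝ, IntervalIntegrable (fun x => f x^2) volume a b :=
    fun a b => (hfc.pow 2).intervalIntegrable a b
  have hhalf1 : (1/16) * ∫ x in (0:ℝ)..π, G x ≤ ∫ x in (0:ℝ)..π, f x^2 := by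
    have hmono := intervalIntegral.integral_mono_on pi_pos.le
      (hFint1.add (hGint1.const_mul (1/16))) (hf2int 0 π)
      (fun x hx => hA2 x ⟨by linarith [hx.1], hx.2⟩)
    rwa [intervalIntegral.integral_add hFint1 (hGint1.const_mul (1/16)), hFTC1, zero_add,
      intervalIntegral.integral_const_mul] at hmono
  have hhalf2 : (1/16) * ∫ x in (-π)..(0:ℝ), G x ≤ ∫ x in (-π)..(0:ℝ), f x^2 := by
    have hmono := intervalIntegral.integral_mono_on (by linarith : -π ≤ (0:ℝ))
      (hFint2.add (hGint2.const_mul (1/16))) (hf2int (-π) 0)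
      (fun x hx => hA2 x ⟨hx.1, by linarith [hx.2]⟩)
    rwa [intervalIntegral.integral_add hFint2 (hGint2.const_mul (1/16)), hFTC2, zero_add,
      intervalIntegral.integral_const_mul] at hmono
  have hGadd := intervalIntegral.integral_add_adjacent_intervals hGint2 hGint1
  have hf2add := intervalIntegral.integral_add_adjacent_intervals (hf2int (-π) 0) (hf2int 0 π)
  have hHardy : (1/16) * ∫ x in (-π)..π, G x ≤ ∫ x in (-π)..π, f x^2 := by
    rw [← hGadd, ← hf2add]
    linarith
  -- integration by parts : I = -∫ U f'
  have hIBP : ∫ x in (-π)..π, f x^2 = - ∫ x in (-π)..π, U x * deriv f x := by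
    have hftc := intervalIntegral.integral_eq_sub_of_hasDerivAt
      (f := fun y => U y * f y) (f' := fun y => f y * f y + U y * deriv f y)
      (a := -π) (b := π)
      (fun x _ => (hU x).mul (hfd x))
      (((hfc.mul hfc).add (hUc.mul hf'c)).intervalIntegrable (μ := MeasureTheory.volume) _ _)
    have hfeq : f π = f (-π) := by
      have h := hper (-π)
      have h2 : -π + 2*π = π := by ring
      rw [h2] at h
      exact h
    have hUeq : U π = U (-π) := by
      have hadd := intervalIntegral.integral_add_adjacent_intervals
        (hfc.intervalIntegrable (μ := MeasureTheory.volume) (-π) 0)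
        (hfc.intervalIntegrable (μ := MeasureTheory.volume) 0 π)
      have hsym : U (-π) = - ∫ x in (-π)..(0:ℝ), f x := intervalIntegral.integral_symm _ _
      have hUp : U π = ∫ x in (0:ℝ)..π, f x := rfl
      rw [hmean] at hadd
      rw [hUp, hsym]
      linarith
    have hb : (fun y => U y * f y) π - (fun y => U y * f y) (-π) = 0 := by
      simp only
      rw [hUeq, hfeq]
      ring
    rw [hb] at hftc
    rw [intervalIntegral.integral_add ((hfc.fun_mul hfc).intervalIntegrable _ _)
      ((hUc.fun_mul hf'c).intervalIntegrable _ _)] at hftc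
    have hsq : ∫ x in (-π)..π, f x * f x = ∫ x in (-π)..π, f x^2 := by
      congr 1
      ext x
      ring
    rw [hsq] at hftc
    linarith
  -- pointwise Cauchy-Schwarz
  have hC : ∀ x ∈ Icc (-π) π, -(U x * deriv f x) ≤ (1/32)*G x
      + 8*((deriv f x)^2*Real.sin (x/2)^2) := by
    intro x hx
    by_cases hx0 : x = 0
    · rw [hx0]
      simp [hGdef, hU0]
    · have hs := hsne x hx hx0
      have h2 := hardy_aux2 (U x) (deriv f x) (Real.sin (x/2)) hs
      simp only [hGdef]
      linarith [h2]
  -- assemble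
  have hGintfull : IntervalIntegrable G volume (-π) π := hGint2.trans hGint1
  have hLcont : Continuous (fun x => (deriv f x)^2*Real.sin (x/2)^2) :=
    (hf'c.pow 2).mul ((Real.continuous_sin.comp (continuous_id.div_const 2)).pow 2)
  have hrhsint : IntervalIntegrable (fun x => (1/32)*G x
      + 8*((deriv f x)^2*Real.sin (x/2)^2)) volume (-π) π :=
    (hGintfull.const_mul (1/32)).add
      (((hLcont.intervalIntegrable (μ := MeasureTheory.volume) (-π) π)).const_mul 8)
  have hCS : ∫ x in (-π)..π, f x^2 ≤ (1/32) * (∫ x in (-π)..π, G x)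
      + 8 * ∫ x in (-π)..π, (deriv f x)^2*Real.sin (x/2)^2 := by
    have hnegint : IntervalIntegrable (fun x => -(U x * deriv f x)) volume (-π) π :=
      ((hUc.mul hf'c).neg).intervalIntegrable _ _
    have hmono : ∫ x in (-π)..π, -(U x * deriv f x)
        ≤ ∫ x in (-π)..π, ((1/32)*G x + 8*((deriv f x)^2*Real.sin (x/2)^2)) :=
      intervalIntegral.integral_mono_on (by linarith : -π ≤ π) hnegint hrhsint
        (fun x hx => hC x hx)
    have hneg : ∫ x in (-π)..π, -(U x * deriv f x)
        = - ∫ x in (-π)..π, U x * deriv f x := intervalIntegral.integral_neg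
    rw [hneg, ← hIBP] at hmono
    rwa [intervalIntegral.integral_add (hGintfull.const_mul (1/32))
      (((hLcont.intervalIntegrable (μ := MeasureTheory.volume) (-π) π)).const_mul 8),
      intervalIntegral.integral_const_mul, intervalIntegral.integral_const_mul] at hmono
  linarith

theorem continuous_hardy_step
    (u : ℝ → ℂ) (hu : ContDiff ℝ (⊤ : ℕ∞) u) (hper : Function.Periodic u (2 * Real.pi))
    (hmean : ∫ x in (-Real.pi)..Real.pi, u x = 0) :
    ∫ x in (-Real.pi)..Real.pi, ‖deriv u x‖ ^ 2 * Real.sin (x / 2) ^ 2 ≥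
      (1 / 16 : ℝ) * ∫ x in (-Real.pi)..Real.pi, ‖u x‖ ^ 2 := by
  have hud : Differentiable ℝ u := hu.differentiable (by simp)
  set f : ℝ → ℝ := fun x => (u x).re with hfdef
  set g : ℝ → ℝ := fun x => (u x).im with hgdef
  have hfC : ContDiff ℝ (⊤ : ℕ∞) f := Complex.reCLM.contDiff.comp hu
  have hgC : ContDiff ℝ (⊤ : ℕ∞) g := Complex.imCLM.contDiff.comp hu
  have hfper : Function.Periodic f (2*Real.pi) := fun x => by
    simp only [hfdef]; rw [hper x]
  have hgper : Function.Periodic g (2*Real.pi) := fun x => by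
    simp only [hgdef]; rw [hper x]
  have huint : IntervalIntegrable u MeasureTheory.volume (-Real.pi) Real.pi :=
    hu.continuous.intervalIntegrable _ _
  have hfmean : ∫ x in (-Real.pi)..Real.pi, f x = 0 := by
    have h := Complex.reCLM.intervalIntegral_comp_comm huint
    rw [hmean] at h
    simpa using h
  have hgmean : ∫ x in (-Real.pi)..Real.pi, g x = 0 := by
    have h := Complex.imCLM.intervalIntegral_comp_comm huint
    rw [hmean] at h
    simpa using h
  have hfd : ∀ x, deriv f x = (deriv u x).re := by
    intro x
    have h2 : HasDerivAt f ((deriv u x).re) x :=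
      (Complex.reCLM.hasFDerivAt.comp_hasDerivAt x (hud x).hasDerivAt)
    exact h2.deriv
  have hgd : ∀ x, deriv g x = (deriv u x).im := by
    intro x
    have h2 : HasDerivAt g ((deriv u x).im) x :=
      (Complex.imCLM.hasFDerivAt.comp_hasDerivAt x (hud x).hasDerivAt)
    exact h2.deriv
  have key1 := hardy_real f hfC hfper hfmean
  have key2 := hardy_real g hgC hgper hgmean
  have hf'c : Continuous (deriv f) := hfC.continuous_deriv (by simp)
  have hg'c : Continuous (deriv g) := hgC.continuous_deriv (by simp)
  have hscont : Continuous (fun x : ℝ => Real.sin (x/2)^2) :=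
    (Real.continuous_sin.comp (continuous_id.div_const 2)).pow 2
  have hnorm : ∀ z : ℂ, ‖z‖^2 = z.re^2 + z.im^2 := fun z => by
    rw [Complex.sq_norm, Complex.normSq_apply]
    ring
  have hsplit1 : ∫ x in (-Real.pi)..Real.pi, ‖u x‖ ^ 2
      = (∫ x in (-Real.pi)..Real.pi, f x^2) + ∫ x in (-Real.pi)..Real.pi, g x^2 := by
    rw [← intervalIntegral.integral_add ((hfC.continuous.fun_pow 2).intervalIntegrable _ _)
      ((hgC.continuous.fun_pow 2).intervalIntegrable _ _)]
    apply intervalIntegral.integral_congr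
    intro x _
    exact hnorm (u x)
  have hsplit2 : ∫ x in (-Real.pi)..Real.pi, ‖deriv u x‖ ^ 2 * Real.sin (x/2) ^ 2
      = (∫ x in (-Real.pi)..Real.pi, deriv f x^2 * Real.sin (x/2)^2)
        + ∫ x in (-Real.pi)..Real.pi, deriv g x^2 * Real.sin (x/2)^2 := by
    rw [← intervalIntegral.integral_add (((hf'c.fun_pow 2).fun_mul hscont).intervalIntegrable _ _)
      (((hg'c.fun_pow 2).fun_mul hscont).intervalIntegrable _ _)]
    apply intervalIntegral.integral_congr
    intro x _
    beta_reduce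
    rw [hfd x, hgd x, hnorm (deriv u x)]
    ring
  rw [ge_iff_le, hsplit1, hsplit2]
  linarith
end

section
/- Let k ≥ 2 be a natural number and let u : ℝ → ℂ be a smooth 2π-periodic function satisfying ∫_{−π}^{π} u(x) sin^{2k−2}(x/2) dx = 0. Then ∫_{−π}^{π} |u'(x)|² sin^{2k}(x/2) dx ≥ ((k−1)/2) ∫_{−π}^{π} |u(x)|² sin^{2k−2}(x/2) dx. -/
open Real Set MeasureTheory intervalIntegral Filter Complex

set_option maxHeartbeats 1000000 in
/-- Ground-state transform Hardy step: for smooth `f` vanishing at `±π`,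
`∫ ‖f'‖² sin(x/2)^(m+2) ≥ (m/4) ∫ ‖f‖² sin(x/2)^m`. -/
lemma key_hardy (m : ℕ) (hm : 2 ≤ m) (hme : Even m) (f : ℝ → ℂ) (hf : ContDiff ℝ (⊤ : ℕ∞) f)
    (hfp : f Real.pi = 0) (hfn : f (-Real.pi) = 0) :
    ((m : ℝ)/4) * ∫ x in (-Real.pi)..Real.pi, Complex.normSq (f x) * Real.sin (x/2) ^ m ≤
      ∫ x in (-Real.pi)..Real.pi, ‖deriv f x‖ ^ 2 * Real.sin (x/2) ^ (m + 2) := by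
  have hpi := Real.pi_pos
  set s : ℝ → ℝ := fun x => Real.sin (x/2) with hs
  set c : ℝ → ℝ := fun x => Real.cos (x/2) with hc
  have hdiff : Differentiable ℝ f := hf.differentiable (by simp)
  have hdc : Continuous (deriv f) := hf.continuous_deriv (by simp)
  have hfcont : Continuous f := hf.continuous
  have hsc : Continuous s := Real.continuous_sin.comp (continuous_id.div_const 2)
  have hcc : Continuous c := Real.continuous_cos.comp (continuous_id.div_const 2)
  set g : ℝ → ℂ := fun x => deriv f x * ((s x : ℝ) : ℂ) + f x * ((((2 * c x)⁻¹ : ℝ)) : ℂ)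
    with hg
  set F : ℝ → ℝ := fun x => Complex.normSq (g x) * s x ^ m with hF
  set D : ℝ → ℝ := fun x => (-1/2 : ℝ) * Complex.normSq (f x) * s x ^ (m+1) / c x with hD
  set E : ℝ → ℝ := fun x =>
    ‖deriv f x‖^2 * s x^(m+2) - ((m:ℝ)/4) * Complex.normSq (f x) * s x^m - F x with hE
  -- uniform bound on the derivative
  obtain ⟨M, hM⟩ : ∃ M, ∀ x ∈ Icc (-Real.pi) Real.pi, ‖deriv f x‖ ≤ M :=
    (isCompact_Icc).exists_bound_of_continuousOn hdc.continuousOn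
  have hM0 : 0 ≤ M := le_trans (norm_nonneg _) (hM 0 ⟨by linarith, by linarith⟩)
  -- bound on f from the mean value theorem
  have hmvt : ∀ y ∈ Icc (-Real.pi) Real.pi, ∀ z ∈ Icc (-Real.pi) Real.pi,
      ‖f y - f z‖ ≤ M * ‖y - z‖ := by
    intro y hy z hz
    exact (convex_Icc _ _).norm_image_sub_le_of_norm_hasDerivWithin_le
      (fun w hw => (hdiff w).hasDerivAt.hasDerivWithinAt) hM hz hy
  have hfb : ∀ x ∈ Icc (-Real.pi) Real.pi, ‖f x‖ ≤ M * (Real.pi - |x|) := by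
    intro x hx
    rcases le_or_gt 0 x with h0 | h0
    · have h := hmvt x hx Real.pi ⟨by linarith, le_refl _⟩
      rw [hfp, sub_zero] at h
      rw [_root_.abs_of_nonneg h0]
      calc ‖f x‖ ≤ M * ‖x - Real.pi‖ := h
        _ = M * (Real.pi - x) := by
            rw [Real.norm_eq_abs, _root_.abs_of_nonpos (by linarith [hx.2])]
            ring
    · have h := hmvt x hx (-Real.pi) ⟨le_refl _, by linarith⟩
      rw [hfn, sub_zero] at h
      rw [_root_.abs_of_neg h0]
      calc ‖f x‖ ≤ M * ‖x - (-Real.pi)‖ := h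
        _ = M * (Real.pi - -x) := by
            rw [Real.norm_eq_abs, _root_.abs_of_nonneg (by linarith [hx.1])]
            ring
  -- lower bound for the cosine weight
  have hcabs : ∀ x : ℝ, c x = Real.cos (|x|/2) := by
    intro x
    rcases abs_cases x with ⟨h, _⟩ | ⟨h, _⟩
    · rw [h]
    · rw [h, show -x/2 = -(x/2) by ring, Real.cos_neg]
  have hcb : ∀ x ∈ Icc (-Real.pi) Real.pi, (Real.pi - |x|)/Real.pi ≤ c x := by
    intro x hx
    have h1 : |x| ≤ Real.pi := abs_le.2 ⟨hx.1, hx.2⟩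
    have h2 : c x = Real.sin (Real.pi/2 - |x|/2) := by
      rw [Real.sin_pi_div_two_sub, hcabs x]
    have h3 := Real.mul_le_sin (x := Real.pi/2 - |x|/2)
      (by linarith [abs_nonneg x]) (by linarith [abs_nonneg x])
    rw [h2]
    calc (Real.pi - |x|)/Real.pi = 2/Real.pi * (Real.pi/2 - |x|/2) := by
          field_simp
      _ ≤ _ := h3
  have hcnn : ∀ x ∈ Icc (-Real.pi) Real.pi, 0 ≤ c x := by
    intro x hx
    refine le_trans ?_ (hcb x hx)
    have h1 : |x| ≤ Real.pi := abs_le.2 ⟨hx.1, hx.2⟩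
    have := le_of_lt hpi
    apply div_nonneg <;> linarith
  have hspow_nonneg : ∀ x : ℝ, 0 ≤ s x ^ m := fun x => hme.pow_nonneg _
  have hspow_le_one : ∀ (x : ℝ) (n : ℕ), |s x ^ n| ≤ 1 := by
    intro x n
    rw [_root_.abs_pow]
    exact pow_le_one₀ (abs_nonneg _) (abs_le.2 ⟨Real.neg_one_le_sin _, Real.sin_le_one _⟩)
  -- bound on the auxiliary function g
  have hgb : ∀ x ∈ Icc (-Real.pi) Real.pi, ‖g x‖ ≤ M + M * Real.pi / 2 := by
    intro x hx
    have h1 : |x| ≤ Real.pi := abs_le.2 ⟨hx.1, hx.2⟩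
    have hterm2 : ‖f x * ((((2 * c x)⁻¹ : ℝ)) : ℂ)‖ ≤ M * Real.pi / 2 := by
      rcases lt_or_eq_of_le h1 with hlt | heq
      · have hppos : 0 < Real.pi - |x| := by linarith
        have hcp : 0 < c x := lt_of_lt_of_le (by positivity) (hcb x hx)
        rw [norm_mul, Complex.norm_real, Real.norm_eq_abs,
          _root_.abs_of_nonneg (by positivity : (0:ℝ) ≤ (2 * c x)⁻¹)]
        have hb1 : ‖f x‖ ≤ M * (Real.pi - |x|) := hfb x hx
        have hb2 : (2 * c x)⁻¹ ≤ Real.pi / (2 * (Real.pi - |x|)) := by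
          have hcb' : 2 * ((Real.pi - |x|)/Real.pi) ≤ 2 * c x := by
            linarith [hcb x hx]
          calc (2 * c x)⁻¹ ≤ (2 * ((Real.pi - |x|)/Real.pi))⁻¹ :=
                inv_anti₀ (by positivity) hcb'
            _ = Real.pi / (2 * (Real.pi - |x|)) := by
                field_simp
        calc ‖f x‖ * (2 * c x)⁻¹ ≤ (M * (Real.pi - |x|)) * (Real.pi / (2 * (Real.pi - |x|))) :=
              mul_le_mul hb1 hb2 (by positivity) (by positivity)
          _ = M * Real.pi / 2 := by field_simp
      · have hc0 : c x = 0 := by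
          rw [hcabs x, heq, Real.cos_pi_div_two]
        rw [hc0]
        simp
        positivity
    calc ‖g x‖ ≤ ‖deriv f x * ((s x : ℝ) : ℂ)‖ + ‖f x * ((((2 * c x)⁻¹ : ℝ)) : ℂ)‖ :=
          norm_add_le _ _
      _ ≤ M * 1 + M * Real.pi / 2 := by
          apply add_le_add _ hterm2
          rw [norm_mul, Complex.norm_real, Real.norm_eq_abs]
          apply mul_le_mul (hM x hx) _ (abs_nonneg _) hM0
          exact abs_le.2 ⟨Real.neg_one_le_sin _, Real.sin_le_one _⟩
      _ = M + M * Real.pi / 2 := by ring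
  have hFnn : ∀ x : ℝ, 0 ≤ F x := by
    intro x
    exact mul_nonneg (Complex.normSq_nonneg _) (hspow_nonneg x)
  have hFb : ∀ x ∈ Icc (-Real.pi) Real.pi, F x ≤ (M + M * Real.pi / 2)^2 := by
    intro x hx
    have h1 : Complex.normSq (g x) ≤ (M + M * Real.pi / 2)^2 := by
      rw [← Complex.sq_norm]
      have := hgb x hx
      have h0 : (0:ℝ) ≤ ‖g x‖ := norm_nonneg _
      nlinarith
    calc F x ≤ Complex.normSq (g x) * 1 := by
          apply mul_le_mul_of_nonneg_left _ (Complex.normSq_nonneg _)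
          calc s x ^ m ≤ |s x ^ m| := le_abs_self _
            _ ≤ 1 := hspow_le_one x m
      _ ≤ (M + M * Real.pi / 2)^2 := by rw [mul_one]; exact h1
  -- integrability of F
  have hFmeas : Measurable F := by
    apply (Complex.continuous_normSq.measurable.comp ?_).mul ((hsc.pow m).measurable)
    apply Measurable.add
    · exact (hdc.mul (Complex.continuous_ofReal.comp hsc)).measurable
    · exact (hfcont.measurable.mul
        (Complex.measurable_ofReal.comp ((continuous_const.mul hcc).measurable.inv)))
  have hFint : IntervalIntegrable F volume (-Real.pi) Real.pi := by
    rw [intervalIntegrable_iff_integrableOn_Ioc_of_le (by linarith)]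
    apply MeasureTheory.Integrable.mono' (g := fun _ => (M + M * Real.pi / 2)^2)
      (MeasureTheory.integrable_const _)
      (hFmeas.aestronglyMeasurable.restrict)
    filter_upwards [MeasureTheory.ae_restrict_mem measurableSet_Ioc] with x hx
    rw [Real.norm_eq_abs, _root_.abs_of_nonneg (hFnn x)]
    exact hFb x ⟨le_of_lt hx.1, hx.2⟩
  -- the fundamental derivative identity
  have hEmain : ∀ x ∈ Ioo (-Real.pi) Real.pi, HasDerivAt D (E x) x := by
    intro x hx
    have hcp : 0 < c x :=
      Real.cos_pos_of_mem_Ioo ⟨by linarith [hx.1], by linarith [hx.2]⟩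
    have hcne : c x ≠ 0 := ne_of_gt hcp
    have hhalf : HasDerivAt (fun y : ℝ => y/2) (1/2) x := (hasDerivAt_id x).div_const 2
    have hsd : HasDerivAt s (Real.cos (x/2) * (1/2)) x :=
      by have h := HasDerivAt.comp x (Real.hasDerivAt_sin (x/2)) hhalf; exact h
    have hcd : HasDerivAt c (-Real.sin (x/2) * (1/2)) x :=
      by have h := HasDerivAt.comp x (Real.hasDerivAt_cos (x/2)) hhalf; exact h
    have hfd : HasDerivAt f (deriv f x) x := (hdiff x).hasDerivAt
    have hre : HasDerivAt (fun y => (f y).re) ((deriv f x).re) x := by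
      have h := Complex.reCLM.hasFDerivAt.comp_hasDerivAt x hfd
      exact h
    have him : HasDerivAt (fun y => (f y).im) ((deriv f x).im) x := by
      have h := Complex.imCLM.hasFDerivAt.comp_hasDerivAt x hfd
      exact h
    have hnf : HasDerivAt (fun y => Complex.normSq (f y))
        (2*((f x).re*(deriv f x).re + (f x).im*(deriv f x).im)) x := by
      have h := (hre.mul hre).add (him.mul him)
      have heq : (fun y => Complex.normSq (f y))
          = fun y => (f y).re*(f y).re + (f y).im*(f y).im := by
        funext y; exact Complex.normSq_apply _
      rw [heq]
      exact h.congr_deriv (by ring)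
    have hpow : HasDerivAt (fun y => s y ^ (m+1))
        (((m:ℝ)+1) * s x ^ m * (Real.cos (x/2) * (1/2))) x := by
      have h := hsd.pow (m+1)
      simp only [Nat.add_sub_cancel] at h
      exact h.congr_deriv (by push_cast; ring)
    have hnum : HasDerivAt (fun y => (-1/2 : ℝ) * Complex.normSq (f y) * s y ^ (m+1))
        (((-1/2 : ℝ) * (2*((f x).re*(deriv f x).re + (f x).im*(deriv f x).im))) * s x^(m+1)
          + ((-1/2 : ℝ) * Complex.normSq (f x))
            * (((m:ℝ)+1) * s x^m * (Real.cos (x/2) * (1/2)))) x :=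
      (hnf.const_mul ((-1 : ℝ)/2)).mul hpow
    have hDd := hnum.div hcd hcne
    have hval : (((((-1/2 : ℝ) * (2*((f x).re*(deriv f x).re + (f x).im*(deriv f x).im)))
            * s x^(m+1)
          + ((-1/2 : ℝ) * Complex.normSq (f x))
            * (((m:ℝ)+1) * s x^m * (Real.cos (x/2) * (1/2)))) * c x
          - ((-1/2 : ℝ) * Complex.normSq (f x) * s x ^ (m+1))
            * (-Real.sin (x/2) * (1/2))) / c x ^ 2) = E x := by
      have hA : ‖deriv f x‖^2 = (deriv f x).re^2 + (deriv f x).im^2 := by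
        rw [Complex.sq_norm, Complex.normSq_apply]; ring
      have hP : Complex.normSq (f x) = (f x).re^2 + (f x).im^2 := by
        rw [Complex.normSq_apply]; ring
      have hgre : (g x).re = (deriv f x).re * s x + (f x).re * (2*c x)⁻¹ := by
        simp [hg, Complex.add_re, Complex.mul_re]
      have hgim : (g x).im = (deriv f x).im * s x + (f x).im * (2*c x)⁻¹ := by
        simp [hg, Complex.add_im, Complex.mul_im]
      have hgn : Complex.normSq (g x)
          = ((deriv f x).re * s x + (f x).re * (2*c x)⁻¹)^2
            + ((deriv f x).im * s x + (f x).im * (2*c x)⁻¹)^2 := by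
        rw [Complex.normSq_apply, hgre, hgim]; ring
      have hpyth : s x^2 + c x^2 = 1 := Real.sin_sq_add_cos_sq (x/2)
      have hsx : Real.sin (x/2) = s x := rfl
      have hcx : Real.cos (x/2) = c x := rfl
      simp only [hE, hF]
      rw [hgn, hA, hP, hsx, hcx]
      field_simp
      ring_nf
      linear_combination (-4 * ((f x).re^2 + (f x).im^2) * s x ^ m) * hpyth
    rw [hD]
    rw [← hval]
    exact hDd
  -- integrability of E
  have hEint : IntervalIntegrable E volume (-Real.pi) Real.pi := by
    apply IntervalIntegrable.sub _ hFint
    exact (((hdc.norm.pow 2).mul (hsc.pow (m+2))).sub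
      ((continuous_const.mul (Complex.continuous_normSq.comp hfcont)).mul (hsc.pow m))).intervalIntegrable _ _
  -- boundary limits of D
  have habsD : ∀ x ∈ Ioo (-Real.pi) Real.pi,
      |D x| = 1/2 * Complex.normSq (f x) * |s x ^ (m+1)| / c x := by
    intro x hx
    have hcp : 0 < c x := Real.cos_pos_of_mem_Ioo ⟨by linarith [hx.1], by linarith [hx.2]⟩
    simp only [hD]
    rw [abs_div, abs_mul, abs_mul, _root_.abs_of_pos hcp,
      _root_.abs_of_nonneg (Complex.normSq_nonneg _)]
    norm_num
  have hDp : Filter.Tendsto D (nhdsWithin Real.pi (Iio Real.pi)) (nhds 0) := by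
    apply squeeze_zero_norm' (a := fun x => Real.pi/2 * M^2 * (Real.pi - x))
    · filter_upwards [Ioo_mem_nhdsLT_of_mem
        (⟨hpi, le_refl Real.pi⟩ : Real.pi ∈ Ioc 0 Real.pi)] with x hx
      have hxI : x ∈ Icc (-Real.pi) Real.pi := ⟨by linarith [hx.1], le_of_lt hx.2⟩
      have habs : |x| = x := _root_.abs_of_nonneg (le_of_lt hx.1)
      have hπx : 0 < Real.pi - x := by linarith [hx.2]
      have hcl : (Real.pi - x)/Real.pi ≤ c x := by
        have := hcb x hxI; rwa [habs] at this
      have hcp : 0 < c x := lt_of_lt_of_le (by positivity) hcl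
      have hf2 : Complex.normSq (f x) ≤ (M * (Real.pi - x))^2 := by
        rw [← Complex.sq_norm]
        have hb := hfb x hxI; rw [habs] at hb
        exact pow_le_pow_left₀ (norm_nonneg _) hb 2
      have hs1 : |s x ^ (m+1)| ≤ 1 := hspow_le_one x (m+1)
      rw [Real.norm_eq_abs, habsD x ⟨by linarith [hx.1], hx.2⟩, div_le_iff₀ hcp]
      have e1 : 1/2 * Complex.normSq (f x) * |s x^(m+1)| ≤ 1/2 * (M*(Real.pi - x))^2 := by
        have t1 : Complex.normSq (f x) * |s x^(m+1)| ≤ Complex.normSq (f x) * 1 :=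
          mul_le_mul_of_nonneg_left hs1 (Complex.normSq_nonneg _)
        have t2 : Complex.normSq (f x) ≤ (M*(Real.pi - x))^2 := hf2
        linarith
      have e2 : (Real.pi/2 * M^2 * (Real.pi - x)) * ((Real.pi - x)/Real.pi)
          ≤ (Real.pi/2 * M^2 * (Real.pi - x)) * c x :=
        mul_le_mul_of_nonneg_left hcl (by positivity)
      have e3 : (Real.pi/2 * M^2 * (Real.pi - x)) * ((Real.pi - x)/Real.pi)
          = 1/2 * (M*(Real.pi - x))^2 := by
        field_simp
      linarith
    · have hcont : Continuous (fun x : ℝ => Real.pi/2 * M^2 * (Real.pi - x)) := by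
        fun_prop
      have h := (hcont.tendsto Real.pi).mono_left
        (nhdsWithin_le_nhds (s := Iio Real.pi))
      simpa using h
  have hDn : Filter.Tendsto D (nhdsWithin (-Real.pi) (Ioi (-Real.pi))) (nhds 0) := by
    apply squeeze_zero_norm' (a := fun x => Real.pi/2 * M^2 * (Real.pi + x))
    · filter_upwards [Ioo_mem_nhdsGT_of_mem
        (⟨le_refl (-Real.pi), by linarith⟩ : -Real.pi ∈ Ico (-Real.pi) (0:ℝ))] with x hx
      have hxI : x ∈ Icc (-Real.pi) Real.pi := ⟨le_of_lt hx.1, by linarith [hx.2]⟩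
      have habs : |x| = -x := _root_.abs_of_neg hx.2
      have hπx : 0 < Real.pi + x := by linarith [hx.1]
      have hcl : (Real.pi + x)/Real.pi ≤ c x := by
        have := hcb x hxI; rw [habs] at this
        calc (Real.pi + x)/Real.pi = (Real.pi - -x)/Real.pi := by ring_nf
          _ ≤ c x := this
      have hcp : 0 < c x := lt_of_lt_of_le (by positivity) hcl
      have hf2 : Complex.normSq (f x) ≤ (M * (Real.pi + x))^2 := by
        rw [← Complex.sq_norm]
        have hb := hfb x hxI; rw [habs] at hb
        rw [show Real.pi - -x = Real.pi + x by ring] at hb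
        exact pow_le_pow_left₀ (norm_nonneg _) hb 2
      have hs1 : |s x ^ (m+1)| ≤ 1 := hspow_le_one x (m+1)
      rw [Real.norm_eq_abs, habsD x ⟨hx.1, by linarith [hx.2]⟩, div_le_iff₀ hcp]
      have e1 : 1/2 * Complex.normSq (f x) * |s x^(m+1)| ≤ 1/2 * (M*(Real.pi + x))^2 := by
        have t1 : Complex.normSq (f x) * |s x^(m+1)| ≤ Complex.normSq (f x) * 1 :=
          mul_le_mul_of_nonneg_left hs1 (Complex.normSq_nonneg _)
        have t2 : Complex.normSq (f x) ≤ (M*(Real.pi + x))^2 := hf2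
        linarith
      have e2 : (Real.pi/2 * M^2 * (Real.pi + x)) * ((Real.pi + x)/Real.pi)
          ≤ (Real.pi/2 * M^2 * (Real.pi + x)) * c x :=
        mul_le_mul_of_nonneg_left hcl (by positivity)
      have e3 : (Real.pi/2 * M^2 * (Real.pi + x)) * ((Real.pi + x)/Real.pi)
          = 1/2 * (M*(Real.pi + x))^2 := by
        field_simp
      linarith
    · have hcont : Continuous (fun x : ℝ => Real.pi/2 * M^2 * (Real.pi + x)) := by
        fun_prop
      have h := (hcont.tendsto (-Real.pi)).mono_left
        (nhdsWithin_le_nhds (s := Ioi (-Real.pi)))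
      simpa using h
  -- FTC
  have hE0 : ∫ x in (-Real.pi)..Real.pi, E x = 0 := by
    have := intervalIntegral.integral_eq_sub_of_hasDerivAt_of_tendsto
      (by linarith : -Real.pi < Real.pi) hEmain hEint hDn hDp
    rw [this]; ring
  -- conclusion
  have hcore : ∀ x : ℝ, ‖deriv f x‖^2 * s x^(m+2)
      = E x + (F x + ((m:ℝ)/4) * Complex.normSq (f x) * s x^m) := by
    intro x; rw [hE]; ring
  have hnfint : IntervalIntegrable (fun x => ((m:ℝ)/4) * Complex.normSq (f x) * s x ^ m)
      volume (-Real.pi) Real.pi :=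
    ((continuous_const.mul (Complex.continuous_normSq.comp hfcont)).mul (hsc.pow m)).intervalIntegrable _ _
  have hFpos : 0 ≤ ∫ x in (-Real.pi)..Real.pi, F x :=
    intervalIntegral.integral_nonneg (by linarith) (fun x _ => hFnn x)
  calc ((m : ℝ)/4) * ∫ x in (-Real.pi)..Real.pi, Complex.normSq (f x) * s x ^ m
      = ∫ x in (-Real.pi)..Real.pi, ((m:ℝ)/4) * Complex.normSq (f x) * s x ^ m := by
        rw [← intervalIntegral.integral_const_mul]
        congr 1; funext x; ring
    _ ≤ (∫ x in (-Real.pi)..Real.pi, E x) + ((∫ x in (-Real.pi)..Real.pi, F x)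
          + ∫ x in (-Real.pi)..Real.pi, ((m:ℝ)/4) * Complex.normSq (f x) * s x ^ m) := by
        rw [hE0]
        linarith
    _ = ∫ x in (-Real.pi)..Real.pi, ‖deriv f x‖^2 * s x^(m+2) := by
        rw [← intervalIntegral.integral_add hFint hnfint,
          ← intervalIntegral.integral_add hEint (hFint.add hnfint)]
        congr 1; funext x
        rw [hcore x]

theorem weighted_continuous_hardy_step
    (k : ℕ) (hk : 2 ≤ k)
    (u : ℝ → ℂ) (hu : ContDiff ℝ (⊤ : ℕ∞) u) (hper : Function.Periodic u (2 * Real.pi))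
    (hmean : ∫ x in (-Real.pi)..Real.pi, u x * (Real.sin (x / 2) : ℂ) ^ (2 * k - 2) = 0) :
    ∫ x in (-Real.pi)..Real.pi, ‖deriv u x‖ ^ 2 * Real.sin (x / 2) ^ (2 * k) ≥
      (((k : ℝ) - 1) / 2) *
        ∫ x in (-Real.pi)..Real.pi, ‖u x‖ ^ 2 * Real.sin (x / 2) ^ (2 * k - 2) := by
  set m : ℕ := 2 * k - 2 with hmdef
  have hm : 2 ≤ m := by omega
  have hme : Even m := by
    refine ⟨k - 1, by omega⟩
  have hm2 : m + 2 = 2 * k := by omega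
  set c₀ : ℂ := u Real.pi with hc₀
  set f : ℝ → ℂ := fun x => u x - c₀ with hfdef
  have hfC : ContDiff ℝ (⊤ : ℕ∞) f := hu.sub contDiff_const
  have hfp : f Real.pi = 0 := by simp [hfdef, hc₀]
  have huper : u (-Real.pi) = u Real.pi := by
    have := hper (-Real.pi)
    rw [show -Real.pi + 2 * Real.pi = Real.pi by ring] at this
    exact this.symm
  have hfn : f (-Real.pi) = 0 := by simp [hfdef, huper, hc₀]
  have hdf : deriv f = deriv u := by
    funext x
    simp only [hfdef]
    exact deriv_sub_const _
  have hkey := key_hardy m hm hme f hfC hfp hfn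
  rw [hdf, hm2] at hkey
  -- mean condition step
  have hmean' : ∫ x in (-Real.pi)..Real.pi,
      Complex.normSq (f x) * Real.sin (x/2) ^ m =
      (∫ x in (-Real.pi)..Real.pi, ‖u x‖ ^ 2 * Real.sin (x/2) ^ m) +
        ‖c₀‖ ^ 2 * ∫ x in (-Real.pi)..Real.pi, Real.sin (x/2) ^ m := by
    have hwc : Continuous (fun x : ℝ => Real.sin (x/2) ^ m) :=
      (Real.continuous_sin.comp (continuous_id.div_const 2)).pow m
    have hmean0 : ∫ x in (-Real.pi)..Real.pi, u x * ((Real.sin (x/2) ^ m : ℝ) : ℂ) = 0 := by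
      simp only [Complex.ofReal_pow]
      exact hmean
    have hintc : IntervalIntegrable
        (fun x => u x * (starRingEnd ℂ) c₀ * ((Real.sin (x/2) ^ m : ℝ) : ℂ))
        volume (-Real.pi) Real.pi :=
      ((hu.continuous.mul continuous_const).mul
        (Complex.continuous_ofReal.comp hwc)).intervalIntegrable _ _
    have hC : ∫ x in (-Real.pi)..Real.pi,
        u x * (starRingEnd ℂ) c₀ * ((Real.sin (x/2) ^ m : ℝ) : ℂ) = 0 := by
      have heq : (fun x => u x * (starRingEnd ℂ) c₀ * ((Real.sin (x/2) ^ m : ℝ) : ℂ))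
          = fun x => (starRingEnd ℂ) c₀ * (u x * ((Real.sin (x/2) ^ m : ℝ) : ℂ)) := by
        funext x; ring
      rw [heq, intervalIntegral.integral_const_mul, hmean0, mul_zero]
    have hcross : ∫ x in (-Real.pi)..Real.pi,
        (u x * (starRingEnd ℂ) c₀).re * Real.sin (x/2) ^ m = 0 := by
      have h1 : ∀ x : ℝ, (u x * (starRingEnd ℂ) c₀).re * Real.sin (x/2) ^ m
          = (u x * (starRingEnd ℂ) c₀ * ((Real.sin (x/2) ^ m : ℝ) : ℂ)).re := by
        intro x
        simp only [Complex.mul_re, Complex.ofReal_re, Complex.ofReal_im, mul_zero, sub_zero]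
      simp only [h1]
      have h2 := Complex.reCLM.intervalIntegral_comp_comm hintc
      simp only [Complex.reCLM_apply] at h2
      rw [h2, hC, Complex.zero_re]
    have hps : ∀ x : ℝ, Complex.normSq (f x) * Real.sin (x/2) ^ m
        = (‖u x‖ ^ 2 * Real.sin (x/2) ^ m + ‖c₀‖ ^ 2 * Real.sin (x/2) ^ m)
          - 2 * ((u x * (starRingEnd ℂ) c₀).re * Real.sin (x/2) ^ m) := by
      intro x
      have : Complex.normSq (f x)
          = ‖u x‖ ^ 2 + ‖c₀‖ ^ 2 - 2 * (u x * (starRingEnd ℂ) c₀).re := by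
        have hfx : f x = u x - c₀ := rfl
        rw [hfx, Complex.normSq_sub]
        simp [Complex.normSq_eq_norm_sq]
      rw [this]; ring
    have i1 : IntervalIntegrable (fun x => ‖u x‖ ^ 2 * Real.sin (x/2) ^ m)
        volume (-Real.pi) Real.pi :=
      ((hu.continuous.norm.pow 2).mul hwc).intervalIntegrable _ _
    have i2 : IntervalIntegrable (fun x => ‖c₀‖ ^ 2 * Real.sin (x/2) ^ m)
        volume (-Real.pi) Real.pi := (continuous_const.mul hwc).intervalIntegrable _ _
    have i3 : IntervalIntegrable
        (fun x => (u x * (starRingEnd ℂ) c₀).re * Real.sin (x/2) ^ m)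
        volume (-Real.pi) Real.pi :=
      (((Complex.continuous_re.comp (hu.continuous.mul continuous_const))).mul
        hwc).intervalIntegrable _ _
    calc ∫ x in (-Real.pi)..Real.pi, Complex.normSq (f x) * Real.sin (x/2) ^ m
        = ∫ x in (-Real.pi)..Real.pi,
            ((‖u x‖ ^ 2 * Real.sin (x/2) ^ m + ‖c₀‖ ^ 2 * Real.sin (x/2) ^ m)
              - 2 * ((u x * (starRingEnd ℂ) c₀).re * Real.sin (x/2) ^ m)) := by
          simp only [hps]
      _ = ((∫ x in (-Real.pi)..Real.pi, ‖u x‖ ^ 2 * Real.sin (x/2) ^ m)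
            + ‖c₀‖ ^ 2 * ∫ x in (-Real.pi)..Real.pi, Real.sin (x/2) ^ m)
          - 2 * ∫ x in (-Real.pi)..Real.pi,
              (u x * (starRingEnd ℂ) c₀).re * Real.sin (x/2) ^ m := by
          rw [intervalIntegral.integral_sub (i1.add i2) (i3.const_mul 2),
            intervalIntegral.integral_add i1 i2, intervalIntegral.integral_const_mul,
            intervalIntegral.integral_const_mul]
      _ = _ := by
          rw [hcross]
          ring
  have hwnn : 0 ≤ ∫ x in (-Real.pi)..Real.pi, Real.sin (x/2) ^ m := by
    apply intervalIntegral.integral_nonneg (by linarith [Real.pi_pos])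
    intro x _
    exact hme.pow_nonneg _
  have hcast : ((m : ℝ))/4 = ((k : ℝ) - 1) / 2 := by
    have : (m : ℝ) = 2 * (k : ℝ) - 2 := by
      rw [hmdef]
      push_cast [Nat.cast_sub (by omega : 2 ≤ 2 * k)]
      ring
    rw [this]; ring
  rw [ge_iff_le, ← hcast]
  calc ((m:ℝ)/4) * ∫ x in (-Real.pi)..Real.pi, ‖u x‖ ^ 2 * Real.sin (x/2) ^ (2*k-2)
      ≤ ((m:ℝ)/4) * ∫ x in (-Real.pi)..Real.pi, Complex.normSq (f x) * Real.sin (x/2) ^ m := by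
        apply mul_le_mul_of_nonneg_left _ (by positivity)
        rw [hmean']
        have : (0:ℝ) ≤ ‖c₀‖^2 * ∫ x in (-Real.pi)..Real.pi, Real.sin (x/2) ^ m := by positivity
        rw [show 2*k-2 = m from rfl]
        linarith
    _ ≤ _ := hkey
end

section
/- (Combinatorial identity.) Let k ≥ 1 be a natural number and let 0 ≤ i ≤ k. Then ∑_{0 ≤ m ≤ min{i, k−i}, 1 ≤ n ≤ k−i} (−1)^n 2^{n−m} C(k+1, i−m) C(k, i+n) C(n−1, m) = (−1)^{k−i} C(k,i) − C(k,i)², where C(n,k) denotes the binomial coefficient. -/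
/-!
Summing over `m` first, the left side is `2 [x^i] (1+x)^(k+1) N` with
`N = ∑_{n ≥ 1} (-1)^n C(k,i+n) (2+x)^(n-1)`. The binomial expansion of `(1 - (2+x))^k` gives
`(2+x)^(i+1) N = (-1)^i ((-1)^k (1+x)^k - R)`, where `R` collects the terms of degree `≤ i` in
`2+x`; dividing by `(2+x)^(i+1)` in `ℝ⟦x⟧` leaves two coefficients.

* `[x^i] (1+x)^(2k+1) / (2+x)^(i+1) = C(k,i)/2`: since `(1+x)^2 = 1 + x(2+x)`, only the term
  `C(k,i) x^i (2+x)^i (1+x)` of `(1+x) (1 + x(2+x))^k` contributes (the substitution `z = x(2+x)`).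
* `[x^i] (1+x)^(k+1) R / (2+x)^(i+1) = (-1)^i [x^i y^i] (1+x)^(k+1) (1+y)^k / (2+x+y)`. As
  `(1+x)^(K+1) (1+y)^L + (1+x)^K (1+y)^(L+1) = (2+x+y) (1+x)^K (1+y)^L`, the symmetry `x ↔ y`
  makes this diagonal coefficient `C(k,i)^2 / 2`.
-/

open scoped BigOperators

open PowerSeries Finset

lemma neg_one_pow_sq {R : Type*} [Monoid R] [HasDistribNeg R] (n : ℕ) :
    ((-1 : R) ^ n) ^ 2 = 1 := by
  rw [← pow_mul, pow_mul', neg_one_sq, one_pow]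

lemma neg_one_pow_sub_eq_pow_add {R : Type*} [Monoid R] [HasDistribNeg R] {a b : ℕ}
    (h : b ≤ a) :
    (-1 : R) ^ (a - b) = (-1) ^ (a + b) := by
  simp [show a + b = a - b + 2 * b by omega, pow_add, pow_mul]

lemma coeff_C_add_X_pow {R : Type*} [CommSemiring R] (a : R) (n m : ℕ) :
    coeff m ((C a + X) ^ n) = a ^ (n - m) * n.choose m := by
  rw [← Polynomial.coe_C, ← Polynomial.coe_X, ← Polynomial.coe_add, ← Polynomial.coe_pow,
    Polynomial.coeff_coe, add_comm, Polynomial.coeff_X_add_C_pow]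

lemma coeff_one_add_X_pow {R : Type*} [CommSemiring R] (n m : ℕ) :
    coeff m ((1 + X : R⟦X⟧) ^ n) = n.choose m := by
  rw [← map_one C, coeff_C_add_X_pow, one_pow, one_mul]

lemma coeff_inv_C_add_X_pow {F : Type*} [Field F] {a : F} (ha : a ≠ 0) (b n : ℕ) :
    coeff n ((C a + X)⁻¹ ^ (b + 1)) = (-1) ^ n * (b + n).choose b / a ^ (n + b + 1) := by
  set v : F⟦X⟧ := C (a⁻¹ ^ (b + 1)) * rescale (-a⁻¹) (invOneSubPow F (b + 1)).val
  have hfac : C a + X = C a * rescale (-a⁻¹) (1 - X) := by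
    rw [map_sub, map_one, rescale_X, mul_sub, mul_one, map_neg, neg_mul, mul_neg, sub_neg_eq_add,
      ← mul_assoc, ← map_mul, mul_inv_cancel₀ ha, map_one, one_mul]
  have hv : (C a + X) ^ (b + 1) * v = 1 := by
    rw [hfac, mul_pow, ← map_pow, ← map_pow, mul_mul_mul_comm, ← map_mul, ← map_mul,
      ← invOneSubPow_inv_eq_one_sub_pow, (invOneSubPow F (b + 1)).inv_val, map_one, ← mul_pow,
      mul_inv_cancel₀ ha, one_pow, map_one, mul_one]
  have hinv : (C a + X) * (C a + X)⁻¹ = 1 := PowerSeries.mul_inv_cancel _ (by simp [ha])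
  have hpow : (C a + X)⁻¹ ^ (b + 1) = v := by
    generalize (C a + X)⁻¹ = w at hinv ⊢
    calc w ^ (b + 1) = w ^ (b + 1) * ((C a + X) ^ (b + 1) * v) := by rw [hv, mul_one]
      _ = ((C a + X) * w) ^ (b + 1) * v := by rw [mul_pow]; ring
      _ = v := by rw [hinv, one_pow, one_mul]
  rw [hpow, coeff_C_mul, coeff_rescale, invOneSubPow_val_succ_eq_mk_add_choose, coeff_mk,
    neg_pow, inv_pow, inv_pow, pow_add, pow_add]
  field_simp
  ring

noncomputable def invTwoAddX : ℝ⟦X⟧ := (C 2 + X)⁻¹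

lemma two_add_X_mul_invTwoAddX : (C 2 + X) * invTwoAddX = 1 :=
  PowerSeries.mul_inv_cancel _ (by simp)

lemma two_add_X_pow_mul_invTwoAddX_pow (n : ℕ) : (C 2 + X) ^ n * invTwoAddX ^ n = 1 := by
  rw [← mul_pow, two_add_X_mul_invTwoAddX, one_pow]

lemma coeff_invTwoAddX_pow (b n : ℕ) :
    coeff n (invTwoAddX ^ (b + 1)) = (-1) ^ n * (b + n).choose b / 2 ^ (n + b + 1) :=
  coeff_inv_C_add_X_pow two_ne_zero b n

lemma one_add_X_mul_invTwoAddX_pow (b : ℕ) :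
    (1 + X) * invTwoAddX ^ (b + 1) = invTwoAddX ^ b - invTwoAddX ^ (b + 1) := by
  have h : (1 + X : ℝ⟦X⟧) = (C 2 + X) - 1 := by
    rw [show (2 : ℝ) = 1 + 1 by norm_num, map_add, map_one]; ring
  rw [h, sub_mul, one_mul, pow_succ', ← mul_assoc, two_add_X_mul_invTwoAddX, one_mul]

lemma coeff_one_add_X_mul_invTwoAddX_pow (d : ℕ) :
    coeff d ((1 + X) * invTwoAddX ^ (d + 1)) = if d = 0 then 1 / 2 else 0 := by
  rw [one_add_X_mul_invTwoAddX_pow, map_sub]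
  rcases d with _ | e
  · rw [coeff_invTwoAddX_pow, pow_zero, coeff_zero_one]
    norm_num
  · have hcentral : (e + 1 + (e + 1)).choose (e + 1) = 2 * (e + (e + 1)).choose e := by
      rw [show e + 1 + (e + 1) = (e + (e + 1)) + 1 by ring, Nat.choose_succ_succ,
        show e + (e + 1) = 2 * e + 1 by ring, Nat.choose_symm_half]
      ring
    rw [coeff_invTwoAddX_pow, coeff_invTwoAddX_pow, hcentral, if_neg (Nat.succ_ne_zero e)]
    push_cast
    rw [show e + 1 + (e + 1) + 1 = (e + 1 + e + 1) + 1 by ring, pow_succ]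
    field_simp
    ring

lemma coeff_one_add_X_pow_odd_mul_invTwoAddX_pow (k i : ℕ) :
    coeff i ((1 + X : ℝ⟦X⟧) ^ (2 * k + 1) * invTwoAddX ^ (i + 1)) = k.choose i / 2 := by
  have hexpand : (1 + X : ℝ⟦X⟧) ^ (2 * k + 1) =
      ∑ j ∈ range (k + 1), C (k.choose j : ℝ) * (X ^ j * ((C 2 + X) ^ j * (1 + X))) := by
    have hsq : (1 + X : ℝ⟦X⟧) ^ 2 = X * (C 2 + X) + 1 := by
      rw [show (2 : ℝ) = 1 + 1 by norm_num, map_add, map_one]; ring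
    rw [pow_succ, pow_mul, hsq, add_pow, sum_mul]
    refine sum_congr rfl fun j _ => ?_
    rw [one_pow, mul_one, mul_pow, ← map_natCast C]
    ring
  have hterm : ∀ j ∈ range (k + 1),
      coeff i (C (k.choose j : ℝ) * (X ^ j * ((C 2 + X) ^ j * (1 + X))) * invTwoAddX ^ (i + 1))
        = if i = j then (k.choose j : ℝ) / 2 else 0 := by
    intro j _
    rw [mul_assoc, coeff_C_mul, mul_assoc, coeff_X_pow_mul']
    by_cases hji : j ≤ i
    · have hpow : invTwoAddX ^ (i + 1) = invTwoAddX ^ j * invTwoAddX ^ (i - j + 1) := by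
        rw [← pow_add]; congr 1; omega
      rw [if_pos hji, hpow, mul_assoc, mul_left_comm (1 + X), ← mul_assoc,
        two_add_X_pow_mul_invTwoAddX_pow, one_mul, coeff_one_add_X_mul_invTwoAddX_pow]
      by_cases hij : i = j
      · rw [if_pos (by omega), if_pos hij, mul_one_div]
      · rw [if_neg (by omega), if_neg hij, mul_zero]
    · rw [if_neg hji, if_neg (by omega), mul_zero]
  rw [hexpand, sum_mul, map_sum, sum_congr rfl hterm, sum_ite_eq]
  split_ifs with hik
  · rfl
  · rw [Nat.choose_eq_zero_of_lt (by simpa using hik)]; simp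

/- `kernelCoeff K L i j` is the coefficient of `x^i y^j` in `(1+x)^K (1+y)^L / (2+x+y)`:
`kernelSeries K i` is the series in `y` whose `b`-th coefficient is the `x^i`-coefficient of
`(-1)^b (1+x)^K / (2+x)^(b+1)`, the `y^b`-coefficient of `(1+x)^K / (2+x+y)`. -/
noncomputable def kernelSeries (K i : ℕ) : ℝ⟦X⟧ :=
  mk fun b => (-1) ^ b * coeff i ((1 + X) ^ K * invTwoAddX ^ (b + 1))

noncomputable def kernelCoeff (K L i j : ℕ) : ℝ :=
  coeff j ((1 + X) ^ L * kernelSeries K i)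

lemma kernelCoeff_eq_sum (K L i j : ℕ) :
    kernelCoeff K L i j = ∑ p ∈ antidiagonal i, ∑ q ∈ antidiagonal j,
      (-1 : ℝ) ^ (p.2 + q.2) * (p.2 + q.2).choose p.2 / 2 ^ (p.2 + q.2 + 1) *
        K.choose p.1 * L.choose q.1 := by
  simp only [kernelCoeff, kernelSeries, coeff_mul, coeff_mk, coeff_one_add_X_pow,
    coeff_invTwoAddX_pow, mul_sum]
  rw [sum_comm]
  refine sum_congr rfl fun p _ => sum_congr rfl fun q _ => ?_
  rw [add_comm q.2, Nat.choose_symm_add, add_right_comm p.2, pow_add]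
  ring

lemma kernelCoeff_symm (K L i j : ℕ) : kernelCoeff K L i j = kernelCoeff L K j i := by
  rw [kernelCoeff_eq_sum, kernelCoeff_eq_sum, sum_comm]
  refine sum_congr rfl fun q _ => sum_congr rfl fun p _ => ?_
  rw [add_comm q.2, Nat.choose_symm_add]
  ring

lemma kernelSeries_succ (K i : ℕ) :
    kernelSeries (K + 1) i = C (K.choose i : ℝ) - (1 + X) * kernelSeries K i := by
  ext b
  rw [kernelSeries, coeff_mk, pow_succ, mul_assoc, one_add_X_mul_invTwoAddX_pow, mul_sub, map_sub,
    map_sub, add_mul, one_mul, map_add, coeff_C]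
  rcases b with _ | b
  · rw [if_pos rfl, coeff_zero_X_mul, kernelSeries, coeff_mk, pow_zero, pow_zero, mul_one,
      coeff_one_add_X_pow]
    ring
  · rw [if_neg b.succ_ne_zero, coeff_succ_X_mul, kernelSeries, coeff_mk, coeff_mk, pow_succ]
    ring

lemma kernelCoeff_succ_add_kernelCoeff_succ (K L i j : ℕ) :
    kernelCoeff (K + 1) L i j + kernelCoeff K (L + 1) i j = K.choose i * L.choose j := by
  rw [kernelCoeff, kernelCoeff, ← map_add, kernelSeries_succ,
    show (1 + X) ^ L * (C (K.choose i : ℝ) - (1 + X) * kernelSeries K i)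
        + (1 + X) ^ (L + 1) * kernelSeries K i = C (K.choose i : ℝ) * (1 + X) ^ L by ring,
    coeff_C_mul, coeff_one_add_X_pow]

lemma kernelCoeff_succ_self (k i : ℕ) :
    kernelCoeff (k + 1) k i i = (k.choose i : ℝ) ^ 2 / 2 := by
  have h := kernelCoeff_succ_add_kernelCoeff_succ k k i i
  rw [kernelCoeff_symm k] at h
  linarith

noncomputable def binomHead (k i : ℕ) : ℝ⟦X⟧ :=
  ∑ r ∈ range (i + 1), C (k.choose r : ℝ) * (-(C 2 + X)) ^ r

noncomputable def binomTail (k i : ℕ) : ℝ⟦X⟧ :=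
  ∑ n ∈ range (k - i), C ((-1) ^ (n + 1) * k.choose (i + 1 + n) : ℝ) * (C 2 + X) ^ n

lemma binomHead_add_binomTail {k i : ℕ} (hi : i ≤ k) :
    binomHead k i + C ((-1) ^ i) * (C 2 + X) ^ (i + 1) * binomTail k i
      = C ((-1) ^ k) * (1 + X) ^ k := by
  have hbase : C ((-1 : ℝ) ^ k) * (1 + X) ^ k = (-(C 2 + X) + 1) ^ k := by
    rw [show (2 : ℝ) = 1 + 1 by norm_num, map_pow, map_neg, map_one, map_add, map_one,
      ← neg_pow]
    ring
  rw [hbase, add_pow (-(C 2 + X) : ℝ⟦X⟧) 1 k,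
    show range (k + 1) = range (i + 1 + (k - i)) by congr 1; omega, sum_range_add, binomHead,
    binomTail, mul_sum]
  congr 1
  · refine sum_congr rfl fun r _ => ?_
    rw [one_pow, mul_one, map_natCast, mul_comm]
  · refine sum_congr rfl fun n _ => ?_
    simp only [one_pow, mul_one, map_mul, map_pow, map_neg, map_one, map_natCast]
    rw [neg_pow (C 2 + X)]
    ring

lemma binomTail_eq_mul_invTwoAddX_pow {k i : ℕ} (hi : i ≤ k) :
    binomTail k i = C ((-1) ^ i) * (C ((-1) ^ k) * (1 + X) ^ k - binomHead k i)
      * invTwoAddX ^ (i + 1) := by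
  have hsign : C ((-1 : ℝ) ^ i) * C ((-1) ^ i) = 1 := by
    rw [← map_mul, ← sq, neg_one_pow_sq, map_one]
  rw [← binomHead_add_binomTail hi, add_sub_cancel_left]
  calc binomTail k i
      = C ((-1 : ℝ) ^ i) * C ((-1) ^ i) * ((C 2 + X) ^ (i + 1) * invTwoAddX ^ (i + 1))
          * binomTail k i := by rw [hsign, two_add_X_pow_mul_invTwoAddX_pow, one_mul, one_mul]
    _ = _ := by ring

lemma coeff_binomHead_eq_kernelCoeff (k i : ℕ) :
    coeff i ((1 + X) ^ (k + 1) * binomHead k i * invTwoAddX ^ (i + 1))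
      = (-1) ^ i * kernelCoeff (k + 1) k i i := by
  have hhead : binomHead k i * invTwoAddX ^ (i + 1)
      = ∑ r ∈ range (i + 1), C ((-1) ^ r * k.choose r : ℝ) * invTwoAddX ^ (i - r + 1) := by
    rw [binomHead, sum_mul]
    refine sum_congr rfl fun r hr => ?_
    rw [show i + 1 = r + (i - r + 1) by have := mem_range.mp hr; omega, pow_add, neg_pow,
      map_mul, map_pow, map_neg, map_one]
    linear_combination (C (k.choose r : ℝ) * (-1) ^ r * invTwoAddX ^ (i - r + 1))
      * two_add_X_pow_mul_invTwoAddX_pow r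
  rw [mul_assoc, hhead, mul_sum, map_sum, kernelCoeff, coeff_mul,
    Nat.sum_antidiagonal_eq_sum_range_succ (fun a b => coeff a ((1 + X) ^ k) * coeff b _), mul_sum]
  refine sum_congr rfl fun r hr => ?_
  have hri : r ≤ i := Nat.lt_succ_iff.mp (mem_range.mp hr)
  rw [mul_left_comm, coeff_C_mul, kernelSeries, coeff_mk, coeff_one_add_X_pow,
    neg_one_pow_sub_eq_pow_add hri, pow_add]
  linear_combination (-(k.choose r : ℝ) * (-1) ^ r
    * coeff i ((1 + X) ^ k * (1 + X) ^ 1 * invTwoAddX ^ (i - r + 1))) * neg_one_pow_sq (R := ℝ) i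

lemma sum_two_zpow_choose_eq_coeff (K i n M : ℕ) (hMi : M ≤ i) (hM : min i n ≤ M) :
    ∑ m ∈ Icc 0 M, (2 : ℝ) ^ (((n + 1 : ℕ) : ℤ) - m) * K.choose (i - m) * n.choose m
      = 2 * coeff i ((C 2 + X) ^ n * (1 + X) ^ K) := by
  have hterm : ∀ m : ℕ, (2 : ℝ) ^ (((n + 1 : ℕ) : ℤ) - m) * K.choose (i - m) * n.choose m
      = 2 * (coeff m ((C (2 : ℝ) + X) ^ n) * coeff (i - m) ((1 + X) ^ K)) := by
    intro m
    rw [coeff_C_add_X_pow, coeff_one_add_X_pow]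
    rcases le_or_gt m n with hmn | hnm
    · rw [show ((n + 1 : ℕ) : ℤ) - m = ((n - m + 1 : ℕ) : ℤ) by omega, zpow_natCast,
        pow_succ]
      ring
    · rw [Nat.choose_eq_zero_of_lt hnm]
      simp
  rw [coeff_mul, Nat.sum_antidiagonal_eq_sum_range_succ (fun a b => coeff a _ * coeff b _),
    mul_sum, sum_congr rfl fun m _ => hterm m]
  refine sum_subset (fun m hm => mem_range.mpr (by rw [mem_Icc] at hm; omega)) fun m hm hmM => ?_
  have hnm : n < m := by rw [mem_range] at hm; rw [mem_Icc] at hmM; omega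
  rw [coeff_C_add_X_pow, Nat.choose_eq_zero_of_lt hnm]
  simp

lemma sum_eq_two_mul_coeff_binomTail (k i : ℕ) :
    (∑ m ∈ Finset.Icc 0 (min i (k - i)), ∑ n ∈ Finset.Icc 1 (k - i),
        (-1 : ℝ) ^ n * (2 : ℝ) ^ ((n : ℤ) - (m : ℤ)) *
          ((k + 1).choose (i - m)) * (k.choose (i + n)) * ((n - 1).choose m))
      = 2 * coeff i ((1 + X) ^ (k + 1) * binomTail k i) := by
  rw [sum_comm, ← Ico_add_one_right_eq_Icc 1 (k - i), sum_Ico_eq_sum_range, binomTail, mul_sum,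
    map_sum, mul_sum]
  refine sum_congr rfl fun n hn => ?_
  have hnk : n < k - i := by simpa using hn
  rw [mul_left_comm, coeff_C_mul, mul_comm ((1 + X) ^ (k + 1)), mul_left_comm 2,
    ← sum_two_zpow_choose_eq_coeff (k + 1) i n (min i (k - i)) (min_le_left _ _) (by omega),
    mul_sum]
  refine sum_congr rfl fun m _ => ?_
  rw [add_comm 1 n, Nat.add_sub_cancel, ← add_assoc, add_right_comm i n 1]
  ring

theorem combinatorial_identity_general
    (k : ℕ) (i : ℕ) (hi : i ≤ k) :
    (∑ m ∈ Finset.Icc 0 (min i (k - i)), ∑ n ∈ Finset.Icc 1 (k - i),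
        (-1 : ℝ) ^ n * (2 : ℝ) ^ ((n : ℤ) - (m : ℤ)) *
          ((k + 1).choose (i - m)) * (k.choose (i + n)) * ((n - 1).choose m)) =
      (-1 : ℝ) ^ (k - i) * (k.choose i : ℝ) - (k.choose i : ℝ) ^ 2 := by
  have hsplit : (1 + X) ^ (k + 1) * binomTail k i = C ((-1) ^ i) * (C ((-1) ^ k)
      * ((1 + X) ^ (2 * k + 1) * invTwoAddX ^ (i + 1))
      - (1 + X) ^ (k + 1) * binomHead k i * invTwoAddX ^ (i + 1)) := by
    rw [binomTail_eq_mul_invTwoAddX_pow hi]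
    ring
  rw [sum_eq_two_mul_coeff_binomTail, hsplit, coeff_C_mul, map_sub, coeff_C_mul,
    coeff_one_add_X_pow_odd_mul_invTwoAddX_pow, coeff_binomHead_eq_kernelCoeff,
    kernelCoeff_succ_self, neg_one_pow_sub_eq_pow_add hi, pow_add]
  linear_combination (-(k.choose i : ℝ) ^ 2) * neg_one_pow_sq (R := ℝ) i

theorem combinatorial_identity
    (k : ℕ) (hk : 1 ≤ k) (i : ℕ) (hi : i ≤ k) :
    (∑ m ∈ Finset.Icc 0 (min i (k - i)), ∑ n ∈ Finset.Icc 1 (k - i),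
        (-1 : ℝ) ^ n * (2 : ℝ) ^ ((n : ℤ) - (m : ℤ)) *
          ((k + 1).choose (i - m)) * (k.choose (i + n)) * ((n - 1).choose m)) =
      (-1 : ℝ) ^ (k - i) * (k.choose i : ℝ) - (k.choose i : ℝ) ^ 2 :=
  combinatorial_identity_general k i hi
end
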